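/- arXiv:1409.5640 — 8 statements merged into one kernel-verified Lean document; each statement's English description precedes it below -/
import Mathlib

section
/- Let λ₁, λ₂ > 0 and let W have the Skellam(λ₁,λ₂) distribution. Then for every bounded function f : ℤ → ℝ, E[λ₁ f(W+1) − W f(W) − λ₂ f(W−1)] = 0. -/
open MeasureTheory ProbabilityTheory Real

/-- The Skellam distribution: law of `X - Y` for `X, Y` independent Poisson random
variables with rates `l1` and `l2`. -/
noncomputable def skellamMeasure (l1 l2 : ℝ) : Measure ℤ :=
  ((poissonMeasure l1.toNNReal).prod (poissonMeasure l2.toNNReal)).map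
    (fun p => (p.1 : ℤ) - (p.2 : ℤ))

/-- Kolmogorov–Smirnov distance between two real random variables on `Ω`. -/
noncomputable def dKS {Ω : Type*} [MeasurableSpace Ω] (μ : Measure Ω) (X Z : Ω → ℝ) : ℝ :=
  ⨆ x : ℝ, |(μ {ω | X ω ≤ x}).toReal - (μ {ω | Z ω ≤ x}).toReal|

/-- Kolmogorov–Smirnov distance between two distributions on `ℤ`. -/
noncomputable def dKSZ (μ1 μ2 : Measure ℤ) : ℝ :=
  ⨆ x : ℝ, |(μ1 {k : ℤ | (k : ℝ) ≤ x}).toReal - (μ2 {k : ℤ | (k : ℝ) ≤ x}).toReal|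

/-- Kolmogorov–Smirnov distance between two distributions on `ℝ`. -/
noncomputable def dKSR (μ1 μ2 : Measure ℝ) : ℝ :=
  ⨆ x : ℝ, |(μ1 {y : ℝ | y ≤ x}).toReal - (μ2 {y : ℝ | y ≤ x}).toReal|

/-- Modified Bessel function of the first kind, of integer order `k`. -/
noncomputable def besselI (k : ℤ) (z : ℝ) : ℝ :=
  ∑' j : ℕ, (z / 2) ^ (2 * j + k.natAbs) /
    ((Nat.factorial j : ℝ) * (Nat.factorial (j + k.natAbs) : ℝ))

/-!
Write `W = X - Y` with `X ~ Po(λ₁)`, `Y ~ Po(λ₂)` independent. The Poisson weights satisfy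
`p(n + 1) (n + 1) = λ p(n)`, which after a shift of the summation index is the Stein identity
`E[X g(X)] = λ E[g(X + 1)]`, valid for every `g` since both sides are the same series.
Applying it in `X` (resp. `Y`) to `f(· - Y)` (resp. `f(X - ·)`) by Fubini gives
`E[X f(W)] = λ₁ E[f(W + 1)]` and `E[Y f(W)] = λ₂ E[f(W - 1)]`; subtract.
-/

open scoped NNReal Nat

lemma poissonWeight_succ_mul (r : ℝ≥0) (n : ℕ) :
    exp (-r) * r ^ (n + 1) / (n + 1)! * (n + 1 : ℝ) = r * (exp (-r) * r ^ n / n !) := by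
  rw [Nat.factorial_succ]
  push_cast
  field_simp
  ring

lemma integral_natCast_smul_poissonMeasure {E : Type*} [NormedAddCommGroup E]
    [NormedSpace ℝ E] [FiniteDimensional ℝ E] (r : ℝ≥0) (g : ℕ → E) :
    ∫ n, (n : ℝ) • g n ∂poissonMeasure r = (r : ℝ) • ∫ n, g (n + 1) ∂poissonMeasure r := by
  rw [integral_poissonMeasure, integral_poissonMeasure, ← tsum_const_smul'',
    ← Nat.succ_injective.tsum_eq]
  · refine tsum_congr fun n => ?_
    rw [smul_smul, smul_smul, Nat.succ_eq_add_one, Nat.cast_add_one, poissonWeight_succ_mul]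
  · rintro (_ | n) hn
    · simp at hn
    · exact ⟨n, rfl⟩

lemma summable_poissonWeight_mul_natCast (r : ℝ≥0) :
    Summable fun n : ℕ => exp (-r) * r ^ n / n ! * n := by
  rw [← summable_nat_add_iff 1]
  simp only [Nat.cast_add_one, poissonWeight_succ_mul]
  exact (hasSum_one_poissonMeasure r).summable.mul_left _

lemma integrable_natCast_poissonMeasure (r : ℝ≥0) :
    Integrable (fun n : ℕ => (n : ℝ)) (poissonMeasure r) := by
  rw [integrable_poissonMeasure_iff]
  simpa using summable_poissonWeight_mul_natCast r

section Prod

variable {β : Type*} [MeasurableSpace β] (ν : Measure β) [IsFiniteMeasure ν] (r : ℝ≥0) {C : ℝ}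

lemma integrable_fst_mul_prod_poissonMeasure {g : ℕ × β → ℝ} (hg : Measurable g)
    (hC : ∀ p, |g p| ≤ C) :
    Integrable (fun p => (p.1 : ℝ) * g p) ((poissonMeasure r).prod ν) :=
  ((integrable_natCast_poissonMeasure r).comp_fst ν).mul_bdd hg.aestronglyMeasurable
    (.of_forall hC)

lemma integrable_snd_mul_prod_poissonMeasure {g : β × ℕ → ℝ} (hg : Measurable g)
    (hC : ∀ p, |g p| ≤ C) :
    Integrable (fun p => (p.2 : ℝ) * g p) (ν.prod (poissonMeasure r)) :=
  ((integrable_natCast_poissonMeasure r).comp_snd ν).mul_bdd hg.aestronglyMeasurable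
    (.of_forall hC)

lemma integral_fst_mul_prod_poissonMeasure {g : ℕ × β → ℝ} (hg : Measurable g)
    (hC : ∀ p, |g p| ≤ C) :
    ∫ p, (p.1 : ℝ) * g p ∂(poissonMeasure r).prod ν =
      r * ∫ p, g (p.1 + 1, p.2) ∂(poissonMeasure r).prod ν := by
  have hg_succ : Integrable (fun p : ℕ × β => g (p.1 + 1, p.2)) ((poissonMeasure r).prod ν) :=
    .of_bound (hg.comp (by fun_prop)).aestronglyMeasurable C (.of_forall fun p => hC _)
  rw [integral_prod_symm _ (integrable_fst_mul_prod_poissonMeasure ν r hg hC),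
    integral_prod_symm _ hg_succ, ← integral_const_mul]
  congr with y
  exact integral_natCast_smul_poissonMeasure r fun n => g (n, y)

lemma integral_snd_mul_prod_poissonMeasure {g : β × ℕ → ℝ} (hg : Measurable g)
    (hC : ∀ p, |g p| ≤ C) :
    ∫ p, (p.2 : ℝ) * g p ∂ν.prod (poissonMeasure r) =
      r * ∫ p, g (p.1, p.2 + 1) ∂ν.prod (poissonMeasure r) := by
  rw [← integral_prod_swap fun p : β × ℕ => (p.2 : ℝ) * g p,
    ← integral_prod_swap fun p : β × ℕ => g (p.1, p.2 + 1)]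
  exact integral_fst_mul_prod_poissonMeasure ν r (hg.comp measurable_swap) fun p => hC _

end Prod

lemma integral_stein_prod_poissonMeasure_eq_zero (r1 r2 : ℝ≥0) {f : ℤ → ℝ} {C : ℝ}
    (hC : ∀ k, |f k| ≤ C) :
    ∫ p : ℕ × ℕ, (r1 * f (p.1 - p.2 + 1) - ((p.1 : ℤ) - p.2 : ℤ) * f (p.1 - p.2) -
      r2 * f (p.1 - p.2 - 1)) ∂(poissonMeasure r1).prod (poissonMeasure r2) = 0 := by
  set P := (poissonMeasure r1).prod (poissonMeasure r2)
  have hf : Measurable fun p : ℕ × ℕ => f (p.1 - p.2) := .of_discrete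
  have hbdd (k : ℕ × ℕ → ℤ) : Integrable (fun p => f (k p)) P :=
    .of_bound .of_discrete C (.of_forall fun p => hC _)
  have i1 := (hbdd fun p => ↑(p.1 + 1) - p.2).const_mul r1
  have i2 := integrable_fst_mul_prod_poissonMeasure (poissonMeasure r2) r1 hf fun p => hC _
  have i3 := integrable_snd_mul_prod_poissonMeasure (poissonMeasure r1) r2 hf fun p => hC _
  have i4 := (hbdd fun p => p.1 - ↑(p.2 + 1)).const_mul r2
  calc _ = ∫ p, ((r1 * f (↑(p.1 + 1) - p.2) - p.1 * f (p.1 - p.2)) +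
          (p.2 * f (p.1 - p.2) - r2 * f (p.1 - ↑(p.2 + 1)))) ∂P := by
        congr with p
        push_cast
        ring_nf
    _ = (r1 * ∫ p, f (↑(p.1 + 1) - p.2) ∂P - ∫ p, p.1 * f (p.1 - p.2) ∂P) +
          (∫ p, p.2 * f (p.1 - p.2) ∂P - r2 * ∫ p, f (p.1 - ↑(p.2 + 1)) ∂P) := by
        rw [integral_add (by exact i1.sub i2) (by exact i3.sub i4), integral_sub i1 i2, integral_sub i3 i4,
          integral_const_mul, integral_const_mul]
    _ = 0 := by
        rw [integral_fst_mul_prod_poissonMeasure _ _ hf fun p => hC _,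
          integral_snd_mul_prod_poissonMeasure _ _ hf fun p => hC _]
        ring

lemma integral_stein_skellamMeasure_eq_zero {l1 l2 : ℝ} (hl1 : 0 ≤ l1) (hl2 : 0 ≤ l2)
    {f : ℤ → ℝ} {C : ℝ} (hC : ∀ k, |f k| ≤ C) :
    ∫ k, (l1 * f (k + 1) - (k : ℝ) * f k - l2 * f (k - 1)) ∂skellamMeasure l1 l2 = 0 := by
  rw [skellamMeasure, integral_map .of_discrete .of_discrete]
  simpa only [Real.coe_toNNReal _ hl1, Real.coe_toNNReal _ hl2] using
    integral_stein_prod_poissonMeasure_eq_zero l1.toNNReal l2.toNNReal hC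

theorem stmt_1_general {Ω : Type*} [MeasurableSpace Ω] (μ : Measure Ω)
    (l1 l2 : ℝ) (hl1 : 0 < l1) (hl2 : 0 < l2)
    (W : Ω → ℤ) (hW : Measurable W) (hlaw : μ.map W = skellamMeasure l1 l2)
    (f : ℤ → ℝ) (hf : ∃ C, ∀ k : ℤ, |f k| ≤ C) :
    ∫ ω, (l1 * f (W ω + 1) - (W ω : ℝ) * f (W ω) - l2 * f (W ω - 1)) ∂μ = 0 := by
  obtain ⟨C, hC⟩ := hf
  rw [← integral_stein_skellamMeasure_eq_zero hl1.le hl2.le hC, ← hlaw,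
    integral_map hW.aemeasurable .of_discrete]

/-- If `W ~ Skellam(λ₁, λ₂)` then for every bounded `f : ℤ → ℝ`,
`E[λ₁ f(W+1) − W f(W) − λ₂ f(W−1)] = 0`. -/
theorem stmt_1 {Ω : Type*} [MeasurableSpace Ω] (μ : Measure Ω) [IsProbabilityMeasure μ]
    (l1 l2 : ℝ) (hl1 : 0 < l1) (hl2 : 0 < l2)
    (W : Ω → ℤ) (hW : Measurable W) (hlaw : μ.map W = skellamMeasure l1 l2)
    (f : ℤ → ℝ) (hf : ∃ C, ∀ k : ℤ, |f k| ≤ C) :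
    ∫ ω, (l1 * f (W ω + 1) - (W ω : ℝ) * f (W ω) - l2 * f (W ω - 1)) ∂μ = 0 :=
  stmt_1_general μ l1 l2 hl1 hl2 W hW hlaw f hf
end

section
/- Let λ₁, λ₂ > 0 and let W be an integer-valued random variable with E|W| < ∞ such that E[λ₁ f(W+1) − W f(W) − λ₂ f(W−1)] = 0 for every bounded function f : ℤ → ℝ. Then W has the Skellam(λ₁,λ₂) distribution. -/
open MeasureTheory ProbabilityTheory Real

/-!
Testing the Stein identity against `f = exp (i t ·)` shows that the characteristic function `φ`
of `W` satisfies `φ' t = i (λ₁ e^{it} - λ₂ e^{-it}) φ t`; differentiating under the integral is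
allowed because `W` is integrable. With `φ 0 = 1` this linear ODE forces
`φ t = exp (λ₁ (e^{it} - 1) + λ₂ (e^{-it} - 1))`, the characteristic function of the Skellam law,
and characteristic functions determine distributions.
-/

open scoped Complex NNReal
open Complex (I)

lemma measurableEmbedding_intCast : MeasurableEmbedding (Int.cast : ℤ → ℝ) where
  injective := Int.cast_injective
  measurable := measurable_of_countable _
  measurableSet_image' _ _ :=
    ((Set.countable_range _).mono (Set.image_subset_range _ _)).measurableSet

lemma charFun_map_intCast (P : Measure ℤ) (t : ℝ) :
    charFun (P.map (Int.cast : ℤ → ℝ)) t = ∫ k : ℤ, cexp (t * k * I) ∂P := by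
  rw [charFun_apply_real, integral_map .of_discrete (by fun_prop)]
  push_cast
  rfl

lemma integral_cexp_poissonMeasure (r : ℝ≥0) (t : ℝ) :
    ∫ n : ℕ, cexp (t * n * I) ∂(poissonMeasure r) = cexp (r * (cexp (t * I) - 1)) := by
  rw [← charFun_map_cast_poissonMeasure, charFun_apply_real,
    integral_map .of_discrete (by fun_prop)]
  push_cast
  rfl

lemma charFun_map_intCast_skellamMeasure {l1 l2 : ℝ} (hl1 : 0 ≤ l1) (hl2 : 0 ≤ l2) (t : ℝ) :
    charFun ((skellamMeasure l1 l2).map (Int.cast : ℤ → ℝ)) t =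
      cexp (l1 * (cexp (t * I) - 1) + l2 * (cexp (-(t * I)) - 1)) := by
  have hsplit (p : ℕ × ℕ) : cexp (t * ((p.1 - p.2 : ℤ) : ℂ) * I) =
      cexp (t * p.1 * I) * cexp ((-t : ℝ) * p.2 * I) := by
    rw [← Complex.exp_add]
    push_cast
    ring_nf
  rw [charFun_map_intCast, skellamMeasure, integral_map .of_discrete .of_discrete]
  simp_rw [hsplit]
  rw [integral_prod_mul (fun m : ℕ => cexp (t * m * I)) (fun n : ℕ => cexp ((-t : ℝ) * n * I)),
    integral_cexp_poissonMeasure, integral_cexp_poissonMeasure, ← Complex.exp_add,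
    Real.coe_toNNReal _ hl1, Real.coe_toNNReal _ hl2]
  push_cast
  ring_nf

def SatisfiesSkellamStein (l1 l2 : ℝ) (P : Measure ℤ) : Prop :=
  ∀ f : ℤ → ℝ, (∃ C, ∀ k : ℤ, |f k| ≤ C) →
    ∫ k, (l1 * f (k + 1) - k * f k - l2 * f (k - 1)) ∂P = 0

namespace SatisfiesSkellamStein

variable {l1 l2 : ℝ} {P : Measure ℤ} [IsFiniteMeasure P]

lemma integral_complex_eq_zero (h : SatisfiesSkellamStein l1 l2 P)
    (hP : Integrable (fun k : ℤ => (k : ℝ)) P) {f : ℤ → ℂ} {C : ℝ} (hf : ∀ k, ‖f k‖ ≤ C) :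
    ∫ k, (l1 * f (k + 1) - k * f k - l2 * f (k - 1)) ∂P = 0 := by
  have hbdd (g : ℤ → ℂ) (hg : ∀ k, ‖g k‖ ≤ C) : Integrable g P :=
    .of_bound .of_discrete C (.of_forall hg)
  have hint : Integrable (fun k : ℤ => l1 * f (k + 1) - k * f k - l2 * f (k - 1)) P := by
    refine ((hbdd _ fun k => hf (k + 1)).const_mul _ |>.sub ?_).sub
      ((hbdd _ fun k => hf (k - 1)).const_mul _)
    simpa using (hP.ofReal (𝕜 := ℂ)).mul_bdd .of_discrete (.of_forall hf)
  apply Complex.ext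
  · rw [← RCLike.re_eq_complex_re, ← integral_re hint, map_zero]
    simpa using h (fun k => (f k).re) ⟨C, fun k => (Complex.abs_re_le_norm _).trans (hf k)⟩
  · rw [← RCLike.im_eq_complex_im, ← integral_im hint, map_zero]
    simpa using h (fun k => (f k).im) ⟨C, fun k => (Complex.abs_im_le_norm _).trans (hf k)⟩

lemma integral_mul_cexp_eq (h : SatisfiesSkellamStein l1 l2 P)
    (hP : Integrable (fun k : ℤ => (k : ℝ)) P) (t : ℝ) :
    ∫ k : ℤ, (k : ℂ) * cexp (t * k * I) ∂P =
      (l1 * cexp (t * I) - l2 * cexp (-(t * I))) * ∫ k : ℤ, cexp (t * k * I) ∂P := by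
  have hnorm (k : ℤ) : ‖cexp (t * k * I)‖ = 1 := by
    simpa using Complex.norm_exp_ofReal_mul_I (t * k)
  have hexp : Integrable (fun k : ℤ => cexp (t * k * I)) P :=
    .of_bound .of_discrete 1 (.of_forall fun k => (hnorm k).le)
  have hmul : Integrable (fun k : ℤ => (k : ℂ) * cexp (t * k * I)) P := by
    simpa using (hP.ofReal (𝕜 := ℂ)).mul_bdd .of_discrete (.of_forall fun k => (hnorm k).le)
  have hstein := h.integral_complex_eq_zero hP (f := fun k => cexp (t * k * I)) (hnorm · |>.le)
  have hshift (k : ℤ) : l1 * cexp (t * (k + 1 : ℤ) * I) - k * cexp (t * k * I) -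
      l2 * cexp (t * (k - 1 : ℤ) * I) =
        (l1 * cexp (t * I) - l2 * cexp (-(t * I))) * cexp (t * k * I) - k * cexp (t * k * I) := by
    push_cast
    simp only [mul_add, mul_sub, add_mul, sub_mul, Complex.exp_add, Complex.exp_sub, Complex.exp_neg,
      mul_one]
    ring
  simp_rw [hshift] at hstein
  rw [integral_sub (hexp.const_mul _) hmul, integral_const_mul] at hstein
  linear_combination -hstein

end SatisfiesSkellamStein

lemma hasDerivAt_charFun {ν : Measure ℝ} [IsFiniteMeasure ν] (hν : Integrable id ν) (t : ℝ) :
    HasDerivAt (charFun ν) (I * ∫ x, x * cexp (t * x * I) ∂ν) t := by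
  have h1 : MemLp id (1 : ℕ) ν := by simpa using memLp_one_iff_integrable.2 hν
  have hd := ((contDiff_charFun h1).differentiable one_ne_zero t).hasDerivAt
  simpa [← iteratedDeriv_one, iteratedDeriv_charFun h1] using hd

lemma eq_mul_cexp_of_hasDerivAt {φ g g' : ℝ → ℂ} (hg : ∀ t, HasDerivAt g (g' t) t)
    (hφ : ∀ t, HasDerivAt φ (g' t * φ t) t) (t : ℝ) : φ t = φ 0 * cexp (g t - g 0) := by
  have hconst (s : ℝ) : HasDerivAt (fun s => φ s * cexp (-g s)) 0 s :=
    ((hφ s).mul (hg s).neg.cexp).congr_deriv (by ring)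
  have := is_const_of_deriv_eq_zero (fun s => (hconst s).differentiableAt)
    (fun s => (hconst s).deriv) t 0
  calc φ t = φ t * cexp (-g t) * cexp (g t) := by rw [mul_assoc, ← Complex.exp_add]; simp
    _ = φ 0 * cexp (g t - g 0) := by rw [this, mul_assoc, ← Complex.exp_add]; ring_nf

theorem SatisfiesSkellamStein.eq_skellamMeasure {l1 l2 : ℝ} {P : Measure ℤ}
    [IsProbabilityMeasure P]
    (hl1 : 0 ≤ l1) (hl2 : 0 ≤ l2) (h : SatisfiesSkellamStein l1 l2 P)
    (hP : Integrable (fun k : ℤ => (k : ℝ)) P) : P = skellamMeasure l1 l2 := by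
  let g (t : ℝ) : ℂ := l1 * (cexp (t * I) - 1) + l2 * (cexp (-(t * I)) - 1)
  have hg (t : ℝ) : HasDerivAt g (I * (l1 * cexp (t * I) - l2 * cexp (-(t * I)))) t := by
    have hlin : HasDerivAt (fun s : ℝ => (s : ℂ) * I) I t := by
      simpa using (hasDerivAt_id t).ofReal_comp.mul_const I
    exact (((hlin.cexp.sub_const 1).const_mul _).add
      ((hlin.neg.cexp.sub_const 1).const_mul _)).congr_deriv (by simp only [Pi.neg_apply]; ring)
  set ν := P.map (Int.cast : ℤ → ℝ)
  have hφ (t : ℝ) : HasDerivAt (charFun ν)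
      (I * (l1 * cexp (t * I) - l2 * cexp (-(t * I))) * charFun ν t) t := by
    have hν : Integrable id ν := (integrable_map_measure aestronglyMeasurable_id .of_discrete).2 hP
    convert hasDerivAt_charFun hν t using 1
    rw [integral_map .of_discrete (by fun_prop), charFun_map_intCast, mul_assoc,
      ← h.integral_mul_cexp_eq hP]
    push_cast
    rfl
  have : IsProbabilityMeasure ν := Measure.isProbabilityMeasure_map .of_discrete
  have : IsProbabilityMeasure (skellamMeasure l1 l2) :=
    Measure.isProbabilityMeasure_map .of_discrete
  refine measurableEmbedding_intCast.map_injective (Measure.ext_of_charFun (funext fun t => ?_))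
  rw [eq_mul_cexp_of_hasDerivAt hg hφ t, charFun_map_intCast_skellamMeasure hl1 hl2]
  simp [g]

/-- If `W` is an integer-valued random variable with `E|W| < ∞` such that
`E[λ₁ f(W+1) − W f(W) − λ₂ f(W−1)] = 0` for every bounded `f : ℤ → ℝ`, then
`W ~ Skellam(λ₁, λ₂)`. -/
theorem stmt_2 {Ω : Type*} [MeasurableSpace Ω] (μ : Measure Ω) [IsProbabilityMeasure μ]
    (l1 l2 : ℝ) (hl1 : 0 < l1) (hl2 : 0 < l2)
    (W : Ω → ℤ) (hW : Measurable W)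
    (hInt : Integrable (fun ω => (W ω : ℝ)) μ)
    (hstein : ∀ f : ℤ → ℝ, (∃ C, ∀ k : ℤ, |f k| ≤ C) →
      ∫ ω, (l1 * f (W ω + 1) - (W ω : ℝ) * f (W ω) - l2 * f (W ω - 1)) ∂μ = 0) :
    μ.map W = skellamMeasure l1 l2 := by
  have := Measure.isProbabilityMeasure_map (μ := μ) hW.aemeasurable
  refine SatisfiesSkellamStein.eq_skellamMeasure hl1.le hl2.le (fun f hf => ?_)
    ((integrable_map_measure .of_discrete hW.aemeasurable).2 hInt)
  rw [integral_map hW.aemeasurable .of_discrete]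
  exact hstein f hf
end

section
/- Let λ₁, λ₂ > 0, let W have the Skellam(λ₁,λ₂) distribution, let x ∈ ℝ, and write I_k for I_k(2√(λ₁λ₂)). If f : ℤ → ℝ is a bounded solution of λ₁ f(k+1) − k f(k) − λ₂ f(k−1) = 1{k ≤ x} − P(W ≤ x) for all k ∈ ℤ, then for every c ∈ ℤ and every m ∈ ℤ: if m > c, f(m) = (−1)^m (√(λ₂/λ₁))^m I_m [ (−1)^c (√(λ₁/λ₂))^c f(c)/I_c + (e^{λ₁+λ₂}/√(λ₁λ₂)) Σ_{n=c}^{m−1} ((−1)^{n+1}/(I_n I_{n+1})) P(W ≤ min{n,x}) P(W > max{n,x}) ], and if m < c, f(m) = (−1)^m (√(λ₂/λ₁))^m I_m [ (−1)^c (√(λ₁/λ₂))^c f(c)/I_c − (e^{λ₁+λ₂}/√(λ₁λ₂)) Σ_{n=m}^{c−1} ((−1)^{n+1}/(I_n I_{n+1})) P(W ≤ min{n,x}) P(W > max{n,x}) ]. -/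
open MeasureTheory ProbabilityTheory Real

/-!
Write `p` and `F` for the probability mass function and the distribution function of the
Skellam law, and `b = ⌊x⌋`. The three-term recurrence of the Bessel functions `I_n` makes `p`
satisfy `λ₁ p(n-1) - λ₂ p(n+1) = n p(n)`, so that `S(n) = λ₁ p(n) f(n+1) + λ₂ p(n+1) f(n)` and
`G(n) = F(min n b) (1 - F(max n b))` have the same increments `p(n) (1{n ≤ b} - F(b))`.
Both tend to `0` at `+∞`, because `p(n) → 0`, `F(n) → 1` and `f` is bounded; hence `S = G`.
Substituting `p(n) = e^{-(λ₁+λ₂)} (√(λ₁/λ₂))^n I_n` turns `S(n) = G(n)` into a formula for the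
increment of `g(n) = (-1)^n (√(λ₁/λ₂))^n f(n) / I_n`, and summing these increments between `c`
and `m` gives the claim.
-/

open Filter Topology Set
open scoped Nat

lemma besselI_neg (k : ℤ) (z : ℝ) : besselI (-k) z = besselI k z := by
  simp only [besselI, Int.natAbs_neg]

lemma summable_besselI_series (k : ℕ) (w : ℝ) :
    Summable fun j : ℕ => w ^ (2 * j + k) / ((j ! : ℝ) * ((j + k) ! : ℝ)) := by
  refine .of_norm_bounded ((Real.summable_pow_div_factorial (w ^ 2)).mul_left (|w| ^ k)) fun j => ?_
  have hk : (1 : ℝ) ≤ (j + k) ! := mod_cast Nat.one_le_iff_ne_zero.2 (Nat.factorial_ne_zero _)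
  have hpos : (0 : ℝ) < j ! * (j + k) ! := by positivity
  rw [Real.norm_eq_abs, abs_div, abs_pow, abs_of_pos hpos, pow_add, pow_mul, sq_abs,
    mul_comm, mul_div_assoc]
  gcongr
  exact le_mul_of_one_le_right (by positivity) hk

lemma besselI_pos (k : ℤ) {z : ℝ} (hz : 0 < z) : 0 < besselI k z :=
  (summable_besselI_series k.natAbs (z / 2)).tsum_pos (fun _ => by positivity) 0 (by positivity)

lemma besselI_recurrence_natCast (k : ℕ) (z : ℝ) :
    z / 2 * (besselI k z - besselI (k + 2) z) = (k + 1) * besselI (k + 1) z := by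
  set w := z / 2
  set a : ℕ → ℝ := fun j => w ^ (2 * j + (k + 1)) / ((j ! : ℝ) * ((j + (k + 1)) ! : ℝ))
  have hlow (j : ℕ) :
      w * (w ^ (2 * j + k) / ((j ! : ℝ) * ((j + k) ! : ℝ))) = (j + k + 1) * a j := by
    simp only [a, show j + (k + 1) = (j + k) + 1 by ring, Nat.factorial_succ]
    push_cast
    field_simp
    ring
  have hhigh (j : ℕ) : w * (w ^ (2 * j + (k + 2)) / ((j ! : ℝ) * ((j + (k + 2)) ! : ℝ))) =
      (j + 1 : ℕ) * a (j + 1) := by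
    simp only [a, show j + 1 + (k + 1) = (j + (k + 2)) by ring, Nat.factorial_succ j]
    push_cast
    field_simp
    ring
  have ha : Summable a := summable_besselI_series (k + 1) w
  have hja : Summable fun j : ℕ => (j : ℝ) * a j := by
    refine (summable_nat_add_iff 1).1 ?_
    simpa only [hhigh] using (summable_besselI_series (k + 2) w).mul_left w
  have hlow' : w * besselI k z = ∑' j : ℕ, ((j : ℝ) * a j + (k + 1) * a j) := by
    rw [besselI, Int.natAbs_natCast, ← tsum_mul_left]
    exact tsum_congr fun j => by rw [hlow]; ring
  have hhigh' : w * besselI (k + 2) z = ∑' j : ℕ, (j : ℝ) * a j := by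
    rw [show ((k : ℤ) + 2) = ((k + 2 : ℕ) : ℤ) by push_cast; ring, besselI, Int.natAbs_natCast,
      ← tsum_mul_left, hja.tsum_eq_zero_add, Nat.cast_zero, zero_mul, zero_add]
    exact tsum_congr hhigh
  rw [mul_sub, hlow', hhigh', hja.tsum_add (ha.mul_left _), tsum_mul_left, add_sub_cancel_left,
    show ((k : ℤ) + 1) = ((k + 1 : ℕ) : ℤ) by push_cast; ring, besselI, Int.natAbs_natCast]

lemma besselI_recurrence (n : ℤ) (z : ℝ) :
    z / 2 * (besselI (n - 1) z - besselI (n + 1) z) = n * besselI n z := by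
  rcases le_or_gt 1 n with hn | hn
  · obtain ⟨k, rfl⟩ : ∃ k : ℕ, n = k + 1 := ⟨(n - 1).toNat, by omega⟩
    simpa [add_assoc, one_add_one_eq_two] using besselI_recurrence_natCast k z
  rcases le_or_gt 0 n with hn' | hn'
  · obtain rfl : n = 0 := by omega
    rw [zero_sub, besselI_neg]
    simp
  · obtain ⟨k, rfl⟩ : ∃ k : ℕ, n = -(k + 1) := ⟨(-n - 1).toNat, by omega⟩
    have := besselI_recurrence_natCast k z
    rw [show -((k : ℤ) + 1) - 1 = -(k + 2) by ring, show -((k : ℤ) + 1) + 1 = -k by ring,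
      besselI_neg, besselI_neg, besselI_neg]
    push_cast
    linarith

instance (l1 l2 : ℝ) : IsProbabilityMeasure (skellamMeasure l1 l2) :=
  Measure.isProbabilityMeasure_map (measurable_of_countable _).aemeasurable

lemma skellamMeasure_singleton (l1 l2 : ℝ) (n : ℤ) :
    skellamMeasure l1 l2 {n} = ∑' j : ℕ,
      poissonMeasure l1.toNNReal {j + n.toNat} * poissonMeasure l2.toNNReal {j + (-n).toNat} := by
  have hfiber : (fun p : ℕ × ℕ => (p.1 : ℤ) - p.2) ⁻¹' {n} =
      ⋃ j : ℕ, {j + n.toNat} ×ˢ {j + (-n).toNat} := by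
    ext ⟨a, b⟩
    simp only [mem_preimage, mem_singleton_iff, mem_iUnion, singleton_prod_singleton,
      Prod.mk.injEq]
    constructor
    · intro h; exact ⟨min a b, by omega, by omega⟩
    · rintro ⟨j, rfl, rfl⟩; push_cast; omega
  rw [skellamMeasure, Measure.map_apply (measurable_of_countable _) (measurableSet_singleton n),
    hfiber, measure_iUnion _ fun _ => .of_discrete]
  · simp only [Measure.prod_prod]
  · intro i j hij
    simp only [Function.onFun, Set.disjoint_prod, Set.disjoint_singleton]
    omega

lemma poisson_mul_poisson_eq_besselI_term {l1 l2 : ℝ} (h1 : 0 < l1) (h2 : 0 < l2) (n : ℤ)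
    (j : ℕ) :
    rexp (-l1) * l1 ^ (j + n.toNat) / (j + n.toNat) ! *
        (rexp (-l2) * l2 ^ (j + (-n).toNat) / (j + (-n).toNat) !) =
      rexp (-(l1 + l2)) * √(l1 / l2) ^ n *
        ((2 * √(l1 * l2) / 2) ^ (2 * j + n.natAbs) / ((j ! : ℝ) * ((j + n.natAbs) ! : ℝ))) := by
  obtain ⟨s1, hs1, rfl⟩ : ∃ s, 0 < s ∧ s ^ 2 = l1 := ⟨√l1, Real.sqrt_pos.2 h1, Real.sq_sqrt h1.le⟩
  obtain ⟨s2, hs2, rfl⟩ : ∃ s, 0 < s ∧ s ^ 2 = l2 := ⟨√l2, Real.sqrt_pos.2 h2, Real.sq_sqrt h2.le⟩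
  rw [← div_pow, ← mul_pow, Real.sqrt_sq (by positivity), Real.sqrt_sq (by positivity),
    neg_add, Real.exp_add]
  obtain ⟨k, rfl | rfl⟩ := Int.eq_nat_or_neg n
  · simp only [Int.toNat_natCast, Int.toNat_neg_natCast, Int.natAbs_natCast, zpow_natCast,
      div_pow, add_zero]
    field_simp
    ring
  · simp only [Int.toNat_natCast, Int.toNat_neg_natCast, neg_neg, Int.natAbs_neg,
      Int.natAbs_natCast, zpow_neg, zpow_natCast, div_pow, inv_div, add_zero]
    field_simp
    ring

lemma skellamMeasure_real_singleton {l1 l2 : ℝ} (h1 : 0 < l1) (h2 : 0 < l2) (n : ℤ) :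
    (skellamMeasure l1 l2).real {n} =
      rexp (-(l1 + l2)) * √(l1 / l2) ^ n * besselI n (2 * √(l1 * l2)) := by
  have hc : 0 ≤ rexp (-(l1 + l2)) * √(l1 / l2) ^ n := by positivity
  have hterm (j : ℕ) : poissonMeasure l1.toNNReal {j + n.toNat} *
      poissonMeasure l2.toNNReal {j + (-n).toNat} = ENNReal.ofReal (rexp (-(l1 + l2)) *
        √(l1 / l2) ^ n * ((2 * √(l1 * l2) / 2) ^ (2 * j + n.natAbs) /
          ((j ! : ℝ) * ((j + n.natAbs) ! : ℝ)))) := by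
    rw [poissonMeasure_singleton, poissonMeasure_singleton, ← ENNReal.ofReal_mul (by positivity),
      Real.coe_toNNReal _ h1.le, Real.coe_toNNReal _ h2.le,
      poisson_mul_poisson_eq_besselI_term h1 h2]
  rw [measureReal_def, skellamMeasure_singleton, tsum_congr hterm,
    ← ENNReal.ofReal_tsum_of_nonneg (fun j => by positivity)
      ((summable_besselI_series _ _).mul_left _),
    tsum_mul_left, besselI,
    ENNReal.toReal_ofReal (mul_nonneg hc (tsum_nonneg fun j => by positivity))]

lemma sqrt_mul_mul_sqrt_div_eq_left {l1 l2 : ℝ} (h1 : 0 ≤ l1) (h2 : 0 < l2) :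
    √(l1 * l2) * √(l1 / l2) = l1 := by
  rw [← Real.sqrt_mul (by positivity), show l1 * l2 * (l1 / l2) = l1 ^ 2 by field_simp,
    Real.sqrt_sq h1]

lemma mul_sqrt_div_eq_sqrt_mul (l1 : ℝ) {l2 : ℝ} (h2 : 0 < l2) :
    l2 * √(l1 / l2) = √(l1 * l2) := by
  rw [← Real.sqrt_sq h2.le, ← Real.sqrt_mul (by positivity), Real.sqrt_sq h2.le,
    show l2 ^ 2 * (l1 / l2) = l1 * l2 by field_simp]

lemma skellamMeasure_real_singleton_recurrence {l1 l2 : ℝ} (h1 : 0 < l1) (h2 : 0 < l2) (n : ℤ) :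
    l1 * (skellamMeasure l1 l2).real {n - 1} - l2 * (skellamMeasure l1 l2).real {n + 1} =
      n * (skellamMeasure l1 l2).real {n} := by
  have hl1 := sqrt_mul_mul_sqrt_div_eq_left h1.le h2
  have hl2 := mul_sqrt_div_eq_sqrt_mul l1 h2
  have hrec := besselI_recurrence n (2 * √(l1 * l2))
  simp only [skellamMeasure_real_singleton h1 h2]
  set E := rexp (-(l1 + l2))
  set r := √(l1 * l2)
  set t := √(l1 / l2)
  have ht : t ≠ 0 := (Real.sqrt_pos.2 (div_pos h1 h2)).ne'
  have hpow : t ^ n = t ^ (n - 1) * t := by rw [← zpow_add_one₀ ht, sub_add_cancel]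
  rw [zpow_add_one₀ ht, hpow]
  linear_combination (-(E * t ^ (n - 1) * besselI (n - 1) (2 * r))) * hl1 -
    (E * t ^ (n - 1) * t * besselI (n + 1) (2 * r)) * hl2 + (E * t ^ (n - 1) * t) * hrec

lemma eq_of_tendsto_atTop_of_forall_eq_sub_one {α : Type*} [TopologicalSpace α] [T2Space α]
    {u : ℤ → α} {a : α} (hu : ∀ n, u n = u (n - 1)) (h : Tendsto u atTop (𝓝 a)) (n : ℤ) :
    u n = a := by
  have hconst : ∀ n, u n = u 0 := by
    intro n
    induction n using Int.induction_on with
    | zero => rfl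
    | succ k ih => rw [hu, add_sub_cancel_right, ih]
    | pred k ih => rw [← ih, hu (-k), sub_eq_add_neg, neg_add_eq_sub, ← neg_add', add_comm]
  rw [hconst n]
  exact tendsto_nhds_unique (tendsto_const_nhds.congr fun n => (hconst n).symm) h

section SteinEquation

variable {μ : Measure ℤ}

lemma measureReal_Iic_eq_add_singleton [IsFiniteMeasure μ] (n : ℤ) :
    μ.real (Iic n) = μ.real (Iic (n - 1)) + μ.real {n} := by
  have hsplit : Iic n = Iic (n - 1) ∪ {n} := by
    ext k; simp only [mem_Iic, mem_union, mem_singleton_iff]; omega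
  rw [hsplit, measureReal_union (by simp) (measurableSet_singleton n)]

lemma measureReal_Ioi_eq_one_sub [IsProbabilityMeasure μ] (n : ℤ) :
    μ.real (Ioi n) = 1 - μ.real (Iic n) := by
  rw [← compl_Iic, probReal_compl_eq_one_sub measurableSet_Iic]

lemma tendsto_measureReal_Ioi_atTop [IsFiniteMeasure μ] :
    Tendsto (fun n : ℤ => μ.real (Ioi n)) atTop (𝓝 0) := by
  have h : Tendsto (fun n : ℤ => μ.real (Iic n)) atTop (𝓝 (μ.real univ)) :=
    (ENNReal.tendsto_toReal (measure_ne_top μ univ)).comp (tendsto_measure_Iic_atTop μ)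
  simpa only [← compl_Iic, measureReal_compl measurableSet_Iic, sub_self] using
    h.const_sub (μ.real univ)

lemma tendsto_measureReal_singleton_atTop [IsFiniteMeasure μ] :
    Tendsto (fun n : ℤ => μ.real {n}) atTop (𝓝 0) :=
  squeeze_zero (fun _ => measureReal_nonneg)
    (fun n => measureReal_mono (s₂ := Ioi (n + -1)) (by simp))
    ((tendsto_measureReal_Ioi_atTop (μ := μ)).comp
      (tendsto_atTop_add_const_right atTop (-1) tendsto_id))

lemma measureReal_Iic_min_mul_Ioi_max_sub [IsProbabilityMeasure μ] (b n : ℤ) :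
    μ.real (Iic (min n b)) * μ.real (Ioi (max n b)) -
        μ.real (Iic (min (n - 1) b)) * μ.real (Ioi (max (n - 1) b)) =
      μ.real {n} * ((if n ≤ b then 1 else 0) - μ.real (Iic b)) := by
  have hstep := measureReal_Iic_eq_add_singleton (μ := μ) n
  rcases le_or_gt n b with hn | hn
  · rw [min_eq_left hn, min_eq_left (by omega), max_eq_right hn, max_eq_right (by omega),
      if_pos hn, measureReal_Ioi_eq_one_sub]
    linear_combination (1 - μ.real (Iic b)) * hstep
  · rw [min_eq_right hn.le, min_eq_right (by omega), max_eq_left hn.le, max_eq_left (by omega),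
      if_neg (by omega), measureReal_Ioi_eq_one_sub, measureReal_Ioi_eq_one_sub]
    linear_combination -μ.real (Iic b) * hstep

lemma tendsto_measureReal_Iic_min_mul_Ioi_max [IsFiniteMeasure μ] (b : ℤ) :
    Tendsto (fun n => μ.real (Iic (min n b)) * μ.real (Ioi (max n b))) atTop (𝓝 0) := by
  have h := (tendsto_measureReal_Ioi_atTop (μ := μ)).const_mul (μ.real (Iic b))
  rw [mul_zero] at h
  exact h.congr' (eventually_atTop.2
    ⟨b, fun n hn => by simp only [min_eq_right hn, max_eq_left hn]⟩)

theorem stein_solution_pmf_mul_add_eq [IsProbabilityMeasure μ] {l1 l2 : ℝ}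
    (hrec : ∀ n : ℤ, l1 * μ.real {n - 1} - l2 * μ.real {n + 1} = n * μ.real {n})
    {f : ℤ → ℝ} (hfb : ∃ C, ∀ k, |f k| ≤ C) (b : ℤ)
    (hf : ∀ k : ℤ, l1 * f (k + 1) - k * f k - l2 * f (k - 1) =
      (if k ≤ b then 1 else 0) - μ.real (Iic b)) (n : ℤ) :
    l1 * μ.real {n} * f (n + 1) + l2 * μ.real {n + 1} * f n =
      μ.real (Iic (min n b)) * μ.real (Ioi (max n b)) := by
  obtain ⟨C, hC⟩ := hfb
  set S : ℤ → ℝ := fun n => l1 * μ.real {n} * f (n + 1) + l2 * μ.real {n + 1} * f n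
  set G : ℤ → ℝ := fun n => μ.real (Iic (min n b)) * μ.real (Ioi (max n b))
  have hstep : ∀ n, S n - G n = S (n - 1) - G (n - 1) := by
    intro n
    simp only [S, G, sub_add_cancel]
    linear_combination μ.real {n} * hf n - f n * hrec n -
      measureReal_Iic_min_mul_Ioi_max_sub (μ := μ) b n
  have hp := tendsto_measureReal_singleton_atTop (μ := μ)
  have hp1 : Tendsto (fun n => l1 * μ.real {n}) atTop (𝓝 0) := by
    simpa using hp.const_mul l1
  have hp2 : Tendsto (fun n => l2 * μ.real {n + 1}) atTop (𝓝 0) := by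
    simpa using (hp.comp (tendsto_atTop_add_const_right atTop 1 tendsto_id)).const_mul l2
  have hS : Tendsto S atTop (𝓝 0) := by
    simpa using (hp1.zero_mul_isBoundedUnder_le (g := fun n => f (n + 1))
      (isBoundedUnder_of ⟨C, fun n => hC (n + 1)⟩)).add
      (hp2.zero_mul_isBoundedUnder_le (isBoundedUnder_of ⟨C, hC⟩))
  have hD := eq_of_tendsto_atTop_of_forall_eq_sub_one hstep
    (by simpa using hS.sub (tendsto_measureReal_Iic_min_mul_Ioi_max b)) n
  exact sub_eq_zero.1 hD

end SteinEquation

lemma Int.sum_Icc_sub_one_sub {M : Type*} [AddCommGroup M] (g : ℤ → M) {c m : ℤ} (h : c ≤ m) :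
    ∑ n ∈ Finset.Icc c (m - 1), (g (n + 1) - g n) = g m - g c := by
  induction m, h using Int.leInduction with
  | base => simp
  | succ n _ ih =>
    have hinsert : Finset.Icc c (n + 1 - 1) = insert n (Finset.Icc c (n - 1)) := by
      ext j; simp only [Finset.mem_Icc, Finset.mem_insert]; omega
    rw [hinsert, Finset.sum_insert (by simp), ih]
    abel

lemma skellam_besselI_weight_sub {l1 l2 : ℝ} (h1 : 0 < l1) (h2 : 0 < l2) (f : ℤ → ℝ) (n : ℤ) :
    (-1 : ℝ) ^ (n + 1) * √(l1 / l2) ^ (n + 1) * (besselI (n + 1) (2 * √(l1 * l2)))⁻¹ * f (n + 1) -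
        (-1 : ℝ) ^ n * √(l1 / l2) ^ n * (besselI n (2 * √(l1 * l2)))⁻¹ * f n =
      rexp (l1 + l2) / √(l1 * l2) *
        ((-1 : ℝ) ^ (n + 1) / (besselI n (2 * √(l1 * l2)) * besselI (n + 1) (2 * √(l1 * l2))) *
          (l1 * (skellamMeasure l1 l2).real {n} * f (n + 1) +
            l2 * (skellamMeasure l1 l2).real {n + 1} * f n)) := by
  have hl1 := sqrt_mul_mul_sqrt_div_eq_left h1.le h2
  have hl2 := mul_sqrt_div_eq_sqrt_mul l1 h2
  simp only [skellamMeasure_real_singleton h1 h2]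
  set z := 2 * √(l1 * l2)
  set r := √(l1 * l2)
  set t := √(l1 / l2)
  have ht : t ≠ 0 := (Real.sqrt_pos.2 (div_pos h1 h2)).ne'
  have hr : r ≠ 0 := (Real.sqrt_pos.2 (mul_pos h1 h2)).ne'
  have hI₀ := (besselI_pos n (by positivity : 0 < z)).ne'
  have hI₁ := (besselI_pos (n + 1) (by positivity : 0 < z)).ne'
  have hsum : l1 * (rexp (-(l1 + l2)) * t ^ n * besselI n z) * f (n + 1) +
      l2 * (rexp (-(l1 + l2)) * t ^ (n + 1) * besselI (n + 1) z) * f n =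
        rexp (-(l1 + l2)) * r * t ^ n *
          (t * besselI n z * f (n + 1) + besselI (n + 1) z * f n) := by
    rw [zpow_add_one₀ ht]
    linear_combination (-(rexp (-(l1 + l2)) * t ^ n * besselI n z * f (n + 1))) * hl1 +
      (rexp (-(l1 + l2)) * t ^ n * besselI (n + 1) z * f n) * hl2
  rw [hsum, Real.exp_neg, zpow_add_one₀ ht, zpow_add_one₀ (by norm_num : (-1 : ℝ) ≠ 0)]
  field_simp
  ring

/-- Closed-form expression for bounded solutions of the Skellam Stein
equation, in terms of modified Bessel functions of the first kind. -/
theorem stmt_5 (l1 l2 : ℝ) (hl1 : 0 < l1) (hl2 : 0 < l2) (x : ℝ)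
    (z : ℝ) (hz : z = 2 * Real.sqrt (l1 * l2))
    (f : ℤ → ℝ) (hfb : ∃ C, ∀ k : ℤ, |f k| ≤ C)
    (hfsol : ∀ k : ℤ,
      l1 * f (k + 1) - (k : ℝ) * f k - l2 * f (k - 1) =
        (if (k : ℝ) ≤ x then 1 else 0)
          - (skellamMeasure l1 l2 {j : ℤ | (j : ℝ) ≤ x}).toReal)
    (c m : ℤ) :
    (m > c →
      f m = (-1 : ℝ) ^ m * (Real.sqrt (l2 / l1)) ^ m * besselI m z *
        ((-1 : ℝ) ^ c * (Real.sqrt (l1 / l2)) ^ c * (besselI c z)⁻¹ * f c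
          + Real.exp (l1 + l2) / Real.sqrt (l1 * l2) *
            ∑ n ∈ Finset.Icc c (m - 1),
              (-1 : ℝ) ^ (n + 1) / (besselI n z * besselI (n + 1) z) *
                (skellamMeasure l1 l2 {k : ℤ | (k : ℝ) ≤ min (n : ℝ) x}).toReal *
                (skellamMeasure l1 l2 {k : ℤ | max (n : ℝ) x < (k : ℝ)}).toReal))
    ∧
    (m < c →
      f m = (-1 : ℝ) ^ m * (Real.sqrt (l2 / l1)) ^ m * besselI m z *
        ((-1 : ℝ) ^ c * (Real.sqrt (l1 / l2)) ^ c * (besselI c z)⁻¹ * f c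
          - Real.exp (l1 + l2) / Real.sqrt (l1 * l2) *
            ∑ n ∈ Finset.Icc m (c - 1),
              (-1 : ℝ) ^ (n + 1) / (besselI n z * besselI (n + 1) z) *
                (skellamMeasure l1 l2 {k : ℤ | (k : ℝ) ≤ min (n : ℝ) x}).toReal *
                (skellamMeasure l1 l2 {k : ℤ | max (n : ℝ) x < (k : ℝ)}).toReal)) := by
  subst hz
  have hIic (y : ℝ) : {k : ℤ | (k : ℝ) ≤ y} = Iic ⌊y⌋ := Int.preimage_Iic (a := y)
  have hIoi (y : ℝ) : {k : ℤ | y < (k : ℝ)} = Ioi ⌊y⌋ := Int.preimage_Ioi (a := y)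
  have hprod (n : ℤ) :=
    stein_solution_pmf_mul_add_eq (skellamMeasure_real_singleton_recurrence hl1 hl2) hfb ⌊x⌋
      (fun k => by simpa only [hIic, Int.le_floor, measureReal_def] using hfsol k) n
  set g : ℤ → ℝ := fun n => (-1 : ℝ) ^ n * √(l1 / l2) ^ n * (besselI n (2 * √(l1 * l2)))⁻¹ * f n
  have hstep (n : ℤ) : g (n + 1) - g n = rexp (l1 + l2) / √(l1 * l2) *
      ((-1 : ℝ) ^ (n + 1) / (besselI n (2 * √(l1 * l2)) * besselI (n + 1) (2 * √(l1 * l2))) *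
        (skellamMeasure l1 l2 {k : ℤ | (k : ℝ) ≤ min (n : ℝ) x}).toReal *
        (skellamMeasure l1 l2 {k : ℤ | max (n : ℝ) x < (k : ℝ)}).toReal) := by
    rw [skellam_besselI_weight_sub hl1 hl2, hprod, hIic, hIoi, Int.floor_mono.map_min,
      Int.floor_mono.map_max, Int.floor_intCast, measureReal_def, measureReal_def, mul_assoc]
  have hfm : f m = (-1 : ℝ) ^ m * √(l2 / l1) ^ m * besselI m (2 * √(l1 * l2)) * g m := by
    have hI := (besselI_pos m (by positivity : 0 < 2 * √(l1 * l2))).ne'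
    have ht : √(l1 / l2) ≠ 0 := (Real.sqrt_pos.2 (div_pos hl1 hl2)).ne'
    simp only [g]
    rw [← inv_div, Real.sqrt_inv, inv_zpow]
    field_simp
    rw [sq, ← mul_zpow]
    norm_num
  refine ⟨fun hcm => ?_, fun hmc => ?_⟩
  · rw [hfm, ← add_sub_cancel (g c) (g m), ← Int.sum_Icc_sub_one_sub g hcm.le, Finset.mul_sum]
    simp only [hstep]
    rfl
  · rw [hfm, ← sub_sub_cancel (g c) (g m), ← Int.sum_Icc_sub_one_sub g hmc.le, Finset.mul_sum]
    simp only [hstep]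
    rfl
end

section
/- Under the graph error model with independent measurement errors and edge unbiasedness λ = |E^c|·α = |E|·β, the Kolmogorov–Smirnov distance between D_E and the Skellam(λ,λ) distribution satisfies d_KS(D_E, Skellam(λ,λ)) ≤ (n_v(n_v−1)/2) · α / |E|. -/
open MeasureTheory ProbabilityTheory Real

/-!
Write `D_E = X - Z` with `X = ∑_{Eᶜ} Y_e` and `Z = ∑_E (1 - Y_e)`: two independent sums of
independent Bernoulli variables, with success probabilities `α` and `β` and the same mean `λ`.
The Stein–Chen method bounds the Kolmogorov distance between a Bernoulli sum `W = ∑ Xᵢ` and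
`Poisson(λ)` by `∑ pᵢ² / λ`, here `α` and `β`: the explicit solution `g` of the Stein equation
`λ g(j+1) - j g(j) = 1[j ≤ k] - P(Po(λ) ≤ k)` has increments at most `1/λ`, and
`λ E g(W+1) - E W g(W) = ∑ pᵢ² E (g(Wᵢ+2) - g(Wᵢ+1))` with `Wᵢ = W - Xᵢ`.
Conditioning on one coordinate at a time shows that the Kolmogorov distance is subadditive for
differences of independent integer variables, so `d_KS(D_E, Skellam(λ,λ)) ≤ α + β`, and
unbiasedness turns `α + β` into `(|E| + |Eᶜ|) α / |E| = (n_v choose 2) α / |E|`.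
-/

open scoped NNReal

namespace ProbabilityTheory

noncomputable def poissonCDF (r : ℝ≥0) (k : ℕ) : ℝ := Po(r).real (Set.Iic k)

lemma poissonMeasure_real_singleton_succ (r : ℝ≥0) (j : ℕ) :
    (j + 1 : ℝ) * Po(r).real {j + 1} = r * Po(r).real {j} := by
  rw [poissonMeasure_real_singleton, poissonMeasure_real_singleton, Nat.factorial_succ]
  push_cast
  field_simp
  ring

lemma poissonCDF_eq_sum (r : ℝ≥0) (k : ℕ) :
    poissonCDF r k = ∑ j ∈ Finset.range (k + 1), Po(r).real {j} := by
  rw [sum_measureReal_singleton, poissonCDF]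
  congr 1
  ext j
  simp

lemma poissonCDF_zero (r : ℝ≥0) : poissonCDF r 0 = Po(r).real {0} := by
  simp [poissonCDF_eq_sum]

lemma poissonCDF_succ (r : ℝ≥0) (k : ℕ) :
    poissonCDF r (k + 1) = poissonCDF r k + Po(r).real {k + 1} := by
  rw [poissonCDF_eq_sum, poissonCDF_eq_sum, Finset.sum_range_succ]

lemma poissonCDF_nonneg (r : ℝ≥0) (k : ℕ) : 0 ≤ poissonCDF r k := measureReal_nonneg

lemma poissonCDF_le_one (r : ℝ≥0) (k : ℕ) : poissonCDF r k ≤ 1 := measureReal_le_one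

lemma poissonCDF_mono (r : ℝ≥0) : Monotone (poissonCDF r) :=
  fun _ _ h => measureReal_mono (Set.Iic_subset_Iic.2 h)

lemma hasSum_poissonMeasure_real_singleton (r : ℝ≥0) : HasSum (fun j => Po(r).real {j}) 1 := by
  simpa only [poissonMeasure_real_singleton] using hasSum_one_poissonMeasure r

lemma one_sub_poissonCDF (r : ℝ≥0) (k : ℕ) :
    1 - poissonCDF r k = ∑' t : ℕ, Po(r).real {t + (k + 1)} := by
  have h := ((hasSum_poissonMeasure_real_singleton r).summable.sum_add_tsum_nat_add (k + 1))
  rw [(hasSum_poissonMeasure_real_singleton r).tsum_eq, ← poissonCDF_eq_sum] at h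
  linarith

lemma mul_poissonCDF_le (r : ℝ≥0) (i : ℕ) :
    r * poissonCDF r i ≤ (i + 1 : ℝ) * poissonCDF r (i + 1) := by
  have hterm : ∀ j ∈ Finset.range (i + 1),
      (r : ℝ) * Po(r).real {j} ≤ (i + 1 : ℝ) * Po(r).real {j + 1} := by
    intro j hj
    rw [← poissonMeasure_real_singleton_succ]
    have : (j : ℝ) ≤ i := by exact_mod_cast Nat.lt_succ_iff.1 (Finset.mem_range.1 hj)
    gcongr
  have h0 : 0 ≤ (i + 1 : ℝ) * Po(r).real {0} := by positivity
  rw [poissonCDF_eq_sum, poissonCDF_eq_sum, Finset.sum_range_succ' _ (i + 1), mul_add,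
    Finset.mul_sum, Finset.mul_sum]
  linarith [Finset.sum_le_sum hterm]

lemma mul_one_sub_poissonCDF_le (r : ℝ≥0) (i : ℕ) :
    (i + 1 : ℝ) * (1 - poissonCDF r (i + 1)) ≤ r * (1 - poissonCDF r i) := by
  have hs : ∀ n, Summable fun t : ℕ => Po(r).real {t + n} :=
    fun n => (summable_nat_add_iff (f := fun j => Po(r).real {j}) n).2
      (hasSum_poissonMeasure_real_singleton r).summable
  rw [one_sub_poissonCDF, one_sub_poissonCDF, ← tsum_mul_left, ← tsum_mul_left]
  refine ((hs _).mul_left _).tsum_le_tsum (fun t => ?_) ((hs _).mul_left _)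
  have h := poissonMeasure_real_singleton_succ r (t + (i + 1))
  rw [show t + (i + 1) + 1 = t + (i + 1 + 1) by ring] at h
  rw [← h]
  refine mul_le_mul_of_nonneg_right ?_ measureReal_nonneg
  push_cast
  linarith [(Nat.cast_nonneg t : (0 : ℝ) ≤ t)]

section Stein

variable {r : ℝ≥0}

noncomputable def steinSolution (r : ℝ≥0) (k : ℕ) : ℕ → ℝ
  | 0 => 0
  | j + 1 => (poissonCDF r (min j k) - poissonCDF r k * poissonCDF r j) / (r * Po(r).real {j})

lemma steinSolution_spec (hr : 0 < r) (k j : ℕ) :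
    r * steinSolution r k (j + 1) - j * steinSolution r k j
      = (if j ≤ k then 1 else 0) - poissonCDF r k := by
  have hr' : (0 : ℝ) < r := hr
  cases j with
  | zero =>
    have hp := poissonMeasure_real_singleton_pos 0 hr
    simp only [steinSolution, Nat.zero_le, min_eq_left, if_true, CharP.cast_eq_zero, zero_mul,
      sub_zero, poissonCDF_zero]
    field_simp
  | succ i =>
    have hp := poissonMeasure_real_singleton_pos (i + 1) hr
    have hrec := poissonMeasure_real_singleton_succ r i
    simp only [steinSolution]
    rw [← hrec, poissonCDF_succ]
    push_cast
    rcases le_or_gt (i + 1) k with h | h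
    · rw [min_eq_left h, min_eq_left (by omega), if_pos h, poissonCDF_succ]
      field_simp
      ring
    · rw [min_eq_right h.le, min_eq_right (by omega), if_neg (by omega)]
      field_simp
      ring

lemma poissonCDF_div_le_succ (hr : 0 < r) (i : ℕ) :
    poissonCDF r i / Po(r).real {i} ≤ poissonCDF r (i + 1) / Po(r).real {i + 1} := by
  have hp := poissonMeasure_real_singleton_pos i hr
  have hp' := poissonMeasure_real_singleton_pos (i + 1) hr
  have hrec := poissonMeasure_real_singleton_succ r i
  rw [div_le_div_iff₀ hp hp']
  refine le_of_mul_le_mul_left ?_ (NNReal.coe_pos.2 hr)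
  calc (r : ℝ) * (poissonCDF r i * Po(r).real {i + 1})
      = r * poissonCDF r i * Po(r).real {i + 1} := by ring
    _ ≤ (i + 1) * poissonCDF r (i + 1) * Po(r).real {i + 1} :=
      mul_le_mul_of_nonneg_right (mul_poissonCDF_le r i) hp'.le
    _ = r * (poissonCDF r (i + 1) * Po(r).real {i}) := by
      linear_combination poissonCDF r (i + 1) * hrec

lemma one_sub_poissonCDF_succ_div_le (hr : 0 < r) (i : ℕ) :
    (1 - poissonCDF r (i + 1)) / Po(r).real {i + 1} ≤ (1 - poissonCDF r i) / Po(r).real {i} := by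
  have hp := poissonMeasure_real_singleton_pos i hr
  have hp' := poissonMeasure_real_singleton_pos (i + 1) hr
  have hrec := poissonMeasure_real_singleton_succ r i
  rw [div_le_div_iff₀ hp' hp]
  refine le_of_mul_le_mul_left ?_ (NNReal.coe_pos.2 hr)
  calc (r : ℝ) * ((1 - poissonCDF r (i + 1)) * Po(r).real {i})
        = (i + 1) * (1 - poissonCDF r (i + 1)) * Po(r).real {i + 1} := by
          linear_combination -(1 - poissonCDF r (i + 1)) * hrec
    _ ≤ r * (1 - poissonCDF r i) * Po(r).real {i + 1} :=
      mul_le_mul_of_nonneg_right (mul_one_sub_poissonCDF_le r i) hp'.le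
    _ = r * ((1 - poissonCDF r i) * Po(r).real {i + 1}) := by ring

-- Both cases of `abs_steinSolution_succ_sub_le` reduce to this: up to a factor in `[0, 1]`,
-- `r` times the increment is one of the two (nonnegative) summands.
lemma stein_increment_sum_le_one (hr : 0 < r) (i : ℕ) :
    (1 - poissonCDF r (i + 1))
        * (poissonCDF r (i + 1) / Po(r).real {i + 1} - poissonCDF r i / Po(r).real {i})
      + poissonCDF r i
        * ((1 - poissonCDF r i) / Po(r).real {i}
          - (1 - poissonCDF r (i + 1)) / Po(r).real {i + 1}) ≤ 1 := by
  have hp := poissonMeasure_real_singleton_pos i hr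
  have hp' := poissonMeasure_real_singleton_pos (i + 1) hr
  have hmono := poissonCDF_div_le_succ hr i
  have hsucc := poissonCDF_succ r i
  have hid : (1 - poissonCDF r (i + 1))
        * (poissonCDF r (i + 1) / Po(r).real {i + 1} - poissonCDF r i / Po(r).real {i})
      + poissonCDF r i
        * ((1 - poissonCDF r i) / Po(r).real {i}
          - (1 - poissonCDF r (i + 1)) / Po(r).real {i + 1})
      = 1 - poissonCDF r (i + 1) + Po(r).real {i + 1} * (poissonCDF r i / Po(r).real {i}) := by
    rw [hsucc]
    field_simp
    ring
  rw [hid]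
  have : Po(r).real {i + 1} * (poissonCDF r i / Po(r).real {i}) ≤ poissonCDF r (i + 1) := by
    rwa [le_div_iff₀ hp', mul_comm] at hmono
  linarith

lemma mul_steinSolution_succ_of_le (hr : 0 < r) {k j : ℕ} (h : j ≤ k) :
    r * steinSolution r k (j + 1)
      = (1 - poissonCDF r k) * (poissonCDF r j / Po(r).real {j}) := by
  have hr' : (r : ℝ) ≠ 0 := (NNReal.coe_pos.2 hr).ne'
  simp only [steinSolution, min_eq_left h]
  field_simp

lemma mul_steinSolution_succ_of_ge (hr : 0 < r) {k j : ℕ} (h : k ≤ j) :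
    r * steinSolution r k (j + 1)
      = poissonCDF r k * ((1 - poissonCDF r j) / Po(r).real {j}) := by
  have hr' : (r : ℝ) ≠ 0 := (NNReal.coe_pos.2 hr).ne'
  simp only [steinSolution, min_eq_right h]
  field_simp

lemma abs_steinSolution_succ_sub_le (hr : 0 < r) (k i : ℕ) :
    |steinSolution r k (i + 2) - steinSolution r k (i + 1)| ≤ 1 / r := by
  have hr' : (0 : ℝ) < r := hr
  rw [le_div_iff₀ hr', ← abs_of_pos hr', ← abs_mul, mul_comm, mul_sub]
  have hkey := stein_increment_sum_le_one hr i
  have ha := poissonCDF_div_le_succ hr i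
  have hb := one_sub_poissonCDF_succ_div_le hr i
  have hPi := poissonCDF_nonneg r i
  have hPi' := poissonCDF_le_one r (i + 1)
  rcases le_or_gt (i + 1) k with h | h
  · rw [mul_steinSolution_succ_of_le hr h, mul_steinSolution_succ_of_le hr (by omega : i ≤ k),
      ← mul_sub, abs_of_nonneg (mul_nonneg (by linarith [poissonCDF_le_one r k]) (by linarith))]
    have := poissonCDF_mono r h
    nlinarith
  · rw [mul_steinSolution_succ_of_ge hr (by omega : k ≤ i + 1),
      mul_steinSolution_succ_of_ge hr (by omega : k ≤ i), ← mul_sub, abs_mul,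
      abs_of_nonneg (poissonCDF_nonneg r k), abs_of_nonpos (by linarith)]
    have := poissonCDF_mono r (by omega : k ≤ i)
    nlinarith

end Stein

lemma sum_mem_Icc_of_zero_or_one {Ω ι : Type*} {X : ι → Ω → ℤ}
    (h01 : ∀ i ω, X i ω = 0 ∨ X i ω = 1) (s : Finset ι) (ω : Ω) :
    ∑ i ∈ s, X i ω ∈ Finset.Icc (0 : ℤ) s.card := by
  rw [Finset.mem_Icc, Finset.card_eq_sum_ones, Nat.cast_sum, Nat.cast_one]
  constructor
  · exact Finset.sum_nonneg fun i _ => by rcases h01 i ω with h | h <;> simp [h]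
  · exact Finset.sum_le_sum fun i _ => by rcases h01 i ω with h | h <;> simp [h]

section SteinChen

variable {Ω ι : Type*} [MeasurableSpace Ω] {μ : Measure Ω}

lemma integrable_comp_of_mem_finset [IsFiniteMeasure μ] {V : Ω → ℤ} (hV : Measurable V)
    {S : Finset ℤ} (hVS : ∀ ω, V ω ∈ S) (f : ℤ → ℝ) : Integrable (fun ω => f (V ω)) μ :=
  .of_bound (Measurable.of_discrete.comp hV).aestronglyMeasurable (∑ z ∈ S, ‖f z‖)
    (.of_forall fun ω => Finset.single_le_sum (fun z _ => norm_nonneg (f z)) (hVS ω))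

lemma integrable_mul_comp_of_mem_finset [IsFiniteMeasure μ] {X V : Ω → ℤ} (hX : Measurable X)
    (hV : Measurable V) (h01 : ∀ ω, X ω = 0 ∨ X ω = 1) {S : Finset ℤ} (hVS : ∀ ω, V ω ∈ S)
    (f : ℤ → ℝ) :
    Integrable (fun ω => (X ω : ℝ) * f (V ω)) μ :=
  (integrable_comp_of_mem_finset hV hVS f).bdd_mul (c := 1)
    (Measurable.of_discrete.comp hX).aestronglyMeasurable
    (.of_forall fun ω => by rcases h01 ω with h | h <;> simp [h])

lemma integral_mul_comp_of_indepFun {X V : Ω → ℤ} (hX : Measurable X) (hV : Measurable V)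
    (h01 : ∀ ω, X ω = 0 ∨ X ω = 1) (hind : IndepFun X V μ) (φ : ℤ → ℝ) :
    ∫ ω, (X ω : ℝ) * φ (V ω) ∂μ = μ.real {ω | X ω = 1} * ∫ ω, φ (V ω) ∂μ := by
  have hmean : ∫ ω, (X ω : ℝ) ∂μ = μ.real {ω | X ω = 1} := by
    have hs : MeasurableSet {ω | X ω = 1} := hX (measurableSet_singleton 1)
    rw [← integral_indicator_one hs]
    congr with ω
    rcases h01 ω with h | h <;> simp [h]
  rw [← hmean]
  exact (hind.comp (φ := fun z : ℤ => (z : ℝ)) (ψ := φ) .of_discrete .of_discrete)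
    |>.integral_mul_eq_mul_integral (Measurable.of_discrete.comp hX).aestronglyMeasurable
      (Measurable.of_discrete.comp hV).aestronglyMeasurable

lemma bernoulli_stein_identity [IsFiniteMeasure μ] {X V : Ω → ℤ} (hX : Measurable X)
    (hV : Measurable V) (h01 : ∀ ω, X ω = 0 ∨ X ω = 1) (hind : IndepFun X V μ) {S : Finset ℤ}
    (hVS : ∀ ω, V ω ∈ S) (f : ℤ → ℝ) :
    μ.real {ω | X ω = 1} * ∫ ω, f (V ω + X ω + 1) ∂μ - ∫ ω, (X ω : ℝ) * f (V ω + X ω) ∂μ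
      = μ.real {ω | X ω = 1} ^ 2 * (∫ ω, f (V ω + 2) ∂μ - ∫ ω, f (V ω + 1) ∂μ) := by
  have hleft : (fun ω => (X ω : ℝ) * f (V ω + X ω)) = fun ω => (X ω : ℝ) * f (V ω + 1) := by
    ext ω; rcases h01 ω with h | h <;> simp [h]
  have hright : (fun ω => f (V ω + X ω + 1))
      = fun ω => f (V ω + 1) + (X ω : ℝ) * (f (V ω + 2) - f (V ω + 1)) := by
    ext ω; rcases h01 ω with h | h <;> simp [h, add_assoc, one_add_one_eq_two]
  rw [hleft, hright, integral_add (integrable_comp_of_mem_finset hV hVS (fun z => f (z + 1)))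
      (integrable_mul_comp_of_mem_finset hX hV h01 hVS (fun z => f (z + 2) - f (z + 1))),
    integral_mul_comp_of_indepFun hX hV h01 hind (fun z => f (z + 2) - f (z + 1)),
    integral_mul_comp_of_indepFun hX hV h01 hind (fun z => f (z + 1)),
    integral_sub (integrable_comp_of_mem_finset hV hVS (fun z => f (z + 2)))
      (integrable_comp_of_mem_finset hV hVS (fun z => f (z + 1)))]
  ring

theorem stein_chen_identity [IsFiniteMeasure μ] [DecidableEq ι] {X : ι → Ω → ℤ}
    (hX : ∀ i, Measurable (X i)) (h01 : ∀ i ω, X i ω = 0 ∨ X i ω = 1) (hind : iIndepFun X μ)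
    (s : Finset ι) (f : ℤ → ℝ) :
    (∑ i ∈ s, μ.real {ω | X i ω = 1}) * ∫ ω, f (∑ i ∈ s, X i ω + 1) ∂μ
        - ∫ ω, ((∑ i ∈ s, X i ω : ℤ) : ℝ) * f (∑ i ∈ s, X i ω) ∂μ
      = ∑ i ∈ s, μ.real {ω | X i ω = 1} ^ 2 *
          (∫ ω, f (∑ j ∈ s.erase i, X j ω + 2) ∂μ - ∫ ω, f (∑ j ∈ s.erase i, X j ω + 1) ∂μ) := by
  have hW : Measurable fun ω => ∑ i ∈ s, X i ω := Finset.measurable_sum s fun i _ => hX i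
  have hterm : ∀ i ∈ s, μ.real {ω | X i ω = 1} * ∫ ω, f (∑ i ∈ s, X i ω + 1) ∂μ
        - ∫ ω, (X i ω : ℝ) * f (∑ i ∈ s, X i ω) ∂μ
      = μ.real {ω | X i ω = 1} ^ 2 *
          (∫ ω, f (∑ j ∈ s.erase i, X j ω + 2) ∂μ - ∫ ω, f (∑ j ∈ s.erase i, X j ω + 1) ∂μ) := by
    intro i hi
    have hindi : IndepFun (X i) (fun ω => ∑ j ∈ s.erase i, X j ω) μ := by
      convert (hind.indepFun_finsetSum_of_notMem hX (Finset.notMem_erase i s)).symm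
      rw [Finset.sum_apply]
    simp_rw [← Finset.sum_erase_add s _ hi]
    exact bernoulli_stein_identity (hX i) (Finset.measurable_sum _ fun j _ => hX j) (h01 i) hindi
      (sum_mem_Icc_of_zero_or_one h01 _) f
  push_cast
  simp_rw [Finset.sum_mul]
  rw [integral_finsetSum s fun i _ => integrable_mul_comp_of_mem_finset (hX i) hW (h01 i)
      (sum_mem_Icc_of_zero_or_one h01 s) f, ← Finset.sum_sub_distrib]
  exact Finset.sum_congr rfl hterm

end SteinChen

section SteinChenBound

lemma abs_integral_sub_integral_le {α : Type*} [MeasurableSpace α] {μ : Measure α}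
    [IsProbabilityMeasure μ] {f g : α → ℝ} (hf : Integrable f μ) (hg : Integrable g μ) {c : ℝ}
    (hfg : ∀ x, |f x - g x| ≤ c) : |∫ x, f x ∂μ - ∫ x, g x ∂μ| ≤ c := by
  rw [← integral_sub hf hg, ← Real.norm_eq_abs]
  simpa using norm_integral_le_of_norm_le_const (μ := μ) (f := fun x => f x - g x)
    (.of_forall fun x => by simpa only [Real.norm_eq_abs] using hfg x)

variable {Ω ι : Type*} [MeasurableSpace Ω] {μ : Measure Ω} [IsProbabilityMeasure μ] {r : ℝ≥0}

lemma abs_integral_steinSolution_sub_le (hr : 0 < r) (k : ℕ) {V : Ω → ℤ} (hV : Measurable V)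
    {N : ℤ} (hVN : ∀ ω, V ω ∈ Finset.Icc 0 N) :
    |∫ ω, steinSolution r k (V ω + 2).toNat ∂μ - ∫ ω, steinSolution r k (V ω + 1).toNat ∂μ|
      ≤ 1 / r := by
  refine abs_integral_sub_integral_le
    (integrable_comp_of_mem_finset hV hVN fun z => steinSolution r k (z + 2).toNat)
    (integrable_comp_of_mem_finset hV hVN fun z => steinSolution r k (z + 1).toNat) fun ω => ?_
  have hV0 : 0 ≤ V ω := (Finset.mem_Icc.1 (hVN ω)).1
  rw [show (V ω + 2).toNat = (V ω).toNat + 2 by omega,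
    show (V ω + 1).toNat = (V ω).toNat + 1 by omega]
  exact abs_steinSolution_succ_sub_le hr k _

lemma integral_stein_equation (hr : 0 < r) (k : ℕ) {W : Ω → ℤ} (hW : Measurable W)
    {N : ℤ} (hWN : ∀ ω, W ω ∈ Finset.Icc 0 N) :
    r * ∫ ω, steinSolution r k (W ω + 1).toNat ∂μ
        - ∫ ω, (W ω : ℝ) * steinSolution r k (W ω).toNat ∂μ
      = μ.real {ω | W ω ≤ k} - poissonCDF r k := by
  have hWk : MeasurableSet {ω | W ω ≤ k} := hW measurableSet_Iic
  have hpt : ∀ ω, r * steinSolution r k (W ω + 1).toNat - W ω * steinSolution r k (W ω).toNat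
      = {ω | W ω ≤ k}.indicator 1 ω - poissonCDF r k := by
    intro ω
    have hW0 : 0 ≤ W ω := (Finset.mem_Icc.1 (hWN ω)).1
    obtain ⟨m, hm⟩ : ∃ m : ℕ, W ω = m := ⟨_, (Int.toNat_of_nonneg hW0).symm⟩
    have := steinSolution_spec hr k m
    simp only [Set.indicator_apply, Set.mem_ofPred_eq, hm, Pi.one_apply, Nat.cast_le] at this ⊢
    rwa [show ((m : ℤ) + 1).toNat = m + 1 by omega, Int.toNat_natCast, Int.cast_natCast]
  rw [← integral_const_mul, ← integral_sub
      ((integrable_comp_of_mem_finset hW hWN fun z => steinSolution r k (z + 1).toNat).const_mul _)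
      (integrable_comp_of_mem_finset hW hWN fun z => z * steinSolution r k z.toNat),
    integral_congr_ae (.of_forall hpt), integral_sub _ (integrable_const _),
    integral_indicator_one hWk, integral_const, probReal_univ, one_smul]
  exact (integrable_const 1).indicator hWk

theorem abs_measureReal_sum_le_sub_poissonCDF_le [DecidableEq ι] {X : ι → Ω → ℤ}
    (hX : ∀ i, Measurable (X i)) (h01 : ∀ i ω, X i ω = 0 ∨ X i ω = 1) (hind : iIndepFun X μ)
    (s : Finset ι) (hr : 0 < r) (hrs : (r : ℝ) = ∑ i ∈ s, μ.real {ω | X i ω = 1}) (k : ℕ) :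
    |μ.real {ω | ∑ i ∈ s, X i ω ≤ k} - poissonCDF r k|
      ≤ (∑ i ∈ s, μ.real {ω | X i ω = 1} ^ 2) / r := by
  have hidentity := stein_chen_identity hX h01 hind s fun z => steinSolution r k z.toNat
  rw [← hrs, integral_stein_equation hr k (Finset.measurable_sum s fun i _ => hX i)
    (sum_mem_Icc_of_zero_or_one h01 s)] at hidentity
  rw [hidentity, Finset.sum_div]
  refine (Finset.abs_sum_le_sum_abs _ _).trans (Finset.sum_le_sum fun i _ => ?_)
  rw [abs_mul, abs_of_nonneg (sq_nonneg _), div_eq_mul_one_div]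
  gcongr
  exact abs_integral_steinSolution_sub_le hr k (Finset.measurable_sum _ fun j _ => hX j)
    (sum_mem_Icc_of_zero_or_one h01 _)

end SteinChenBound

lemma integrable_measureReal_comp {β : Type*} [MeasurableSpace β] (ν : Measure ℤ)
    [IsFiniteMeasure ν] (μ : Measure β) [IsProbabilityMeasure μ] (S : ℤ → Set β) :
    Integrable (fun z => μ.real (S z)) ν :=
  .of_bound Measurable.of_discrete.aestronglyMeasurable 1
    (.of_forall fun z => by rw [Real.norm_of_nonneg measureReal_nonneg]; exact measureReal_le_one)

lemma measureReal_Ici_eq_one_sub {ν : Measure ℤ} [IsProbabilityMeasure ν] (t : ℤ) :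
    ν.real (Set.Ici t) = 1 - ν.real (Set.Iic (t - 1)) := by
  rw [← probReal_univ (μ := ν), ← measureReal_compl .of_discrete]
  congr with z
  simp only [Set.mem_Ici, Set.mem_compl_iff, Set.mem_Iic]
  omega

lemma measureReal_map_sub_Iic_eq_integral_left (μ ν : Measure ℤ) [IsFiniteMeasure μ] [SFinite ν]
    (m : ℤ) :
    ((μ.prod ν).map fun p => p.1 - p.2).real (Set.Iic m)
      = ∫ z, μ.real (Set.Iic (m + z)) ∂ν := by
  rw [map_measureReal_apply .of_discrete .of_discrete, measureReal_def,
    Measure.prod_apply_symm .of_discrete, ← integral_toReal .of_discrete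
      (.of_forall fun _ => measure_lt_top _ _)]
  congr with z
  simp only [measureReal_def, Set.preimage]
  congr with x
  simp only [Set.mem_ofPred_eq, Set.mem_Iic]
  omega

lemma measureReal_map_sub_Iic_eq_integral_right (μ ν : Measure ℤ) [SFinite μ] [IsFiniteMeasure ν]
    (m : ℤ) :
    ((μ.prod ν).map fun p => p.1 - p.2).real (Set.Iic m)
      = ∫ x, ν.real (Set.Ici (x - m)) ∂μ := by
  rw [map_measureReal_apply .of_discrete .of_discrete, measureReal_def,
    Measure.prod_apply .of_discrete, ← integral_toReal .of_discrete
      (.of_forall fun _ => measure_lt_top _ _)]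
  congr with x
  simp only [measureReal_def, Set.preimage]
  congr with z
  simp only [Set.mem_ofPred_eq, Set.mem_Iic]
  omega

lemma abs_measureReal_map_sub_Iic_sub_le {μ₁ μ₂ ν₁ ν₂ : Measure ℤ} [IsProbabilityMeasure μ₁]
    [IsProbabilityMeasure μ₂] [IsProbabilityMeasure ν₁] [IsProbabilityMeasure ν₂] {a b : ℝ}
    (hμ : ∀ k, |μ₁.real (Set.Iic k) - μ₂.real (Set.Iic k)| ≤ a)
    (hν : ∀ k, |ν₁.real (Set.Iic k) - ν₂.real (Set.Iic k)| ≤ b) (m : ℤ) :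
    |((μ₁.prod ν₁).map fun p => p.1 - p.2).real (Set.Iic m)
      - ((μ₂.prod ν₂).map fun p => p.1 - p.2).real (Set.Iic m)| ≤ a + b := by
  have hμ₁₂ : |((μ₁.prod ν₁).map fun p => p.1 - p.2).real (Set.Iic m)
      - ((μ₂.prod ν₁).map fun p => p.1 - p.2).real (Set.Iic m)| ≤ a := by
    rw [measureReal_map_sub_Iic_eq_integral_left, measureReal_map_sub_Iic_eq_integral_left]
    exact abs_integral_sub_integral_le (integrable_measureReal_comp _ _ _)
      (integrable_measureReal_comp _ _ _) fun z => hμ (m + z)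
  have hν₁₂ : |((μ₂.prod ν₁).map fun p => p.1 - p.2).real (Set.Iic m)
      - ((μ₂.prod ν₂).map fun p => p.1 - p.2).real (Set.Iic m)| ≤ b := by
    rw [measureReal_map_sub_Iic_eq_integral_right, measureReal_map_sub_Iic_eq_integral_right]
    refine abs_integral_sub_integral_le (integrable_measureReal_comp _ _ _)
      (integrable_measureReal_comp _ _ _) fun x => ?_
    rw [measureReal_Ici_eq_one_sub, measureReal_Ici_eq_one_sub, sub_sub_sub_cancel_left,
      abs_sub_comm]
    exact hν _
  exact (abs_sub_le _ _ _).trans (add_le_add hμ₁₂ hν₁₂)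

lemma dKSZ_le_of_forall_Iic {μ₁ μ₂ : Measure ℤ} {a : ℝ}
    (h : ∀ k, |μ₁.real (Set.Iic k) - μ₂.real (Set.Iic k)| ≤ a) : dKSZ μ₁ μ₂ ≤ a := by
  refine ciSup_le fun x : ℝ => ?_
  have hfloor : {k : ℤ | (k : ℝ) ≤ x} = Set.Iic ⌊x⌋ := by
    ext k
    simp [Int.le_floor]
  rw [hfloor]
  exact h ⌊x⌋

lemma IndepFun.map_sub_eq_map_prod {Ω : Type*} [MeasurableSpace Ω] {μ : Measure Ω}
    [IsFiniteMeasure μ] {X Z : Ω → ℤ} (hX : Measurable X) (hZ : Measurable Z)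
    (hind : IndepFun X Z μ) :
    μ.map (fun ω => X ω - Z ω) = ((μ.map X).prod (μ.map Z)).map fun p => p.1 - p.2 := by
  rw [← (indepFun_iff_map_prod_eq_prod_map_map hX.aemeasurable hZ.aemeasurable).1 hind,
    Measure.map_map .of_discrete (hX.prodMk hZ)]
  rfl

lemma skellamMeasure_eq_map_prod (l₁ l₂ : ℝ) :
    skellamMeasure l₁ l₂
      = (Po(ℤ, l₁.toNNReal).prod Po(ℤ, l₂.toNNReal)).map fun p => p.1 - p.2 := by
  rw [skellamMeasure, Measure.map_prod_map _ _ .of_discrete .of_discrete,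
    Measure.map_map .of_discrete .of_discrete]
  rfl

lemma poissonMeasure_map_cast_real_Iic_natCast (r : ℝ≥0) (k : ℕ) :
    Po(ℤ, r).real (Set.Iic (k : ℤ)) = poissonCDF r k := by
  rw [map_measureReal_apply .of_discrete .of_discrete, poissonCDF]
  congr with j
  simp

lemma poissonMeasure_map_cast_real_Iic_of_neg (r : ℝ≥0) {k : ℤ} (hk : k < 0) :
    Po(ℤ, r).real (Set.Iic k) = 0 := by
  rw [map_measureReal_apply .of_discrete .of_discrete]
  convert measureReal_empty
  ext j
  simp only [Set.mem_preimage, Set.mem_Iic, Set.mem_empty_iff_false, iff_false, not_le]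
  omega

section BernoulliSums

variable {Ω ι : Type*} [MeasurableSpace Ω] {μ : Measure Ω}

lemma iIndepFun.indepFun_finsetSum_finsetSum {β : Type*} [AddCommMonoid β] [MeasurableSpace β]
    [MeasurableAdd₂ β] {X : ι → Ω → β} (hind : iIndepFun X μ) (hX : ∀ i, Measurable (X i))
    {s t : Finset ι} (hst : Disjoint s t) :
    IndepFun (fun ω => ∑ i ∈ s, X i ω) (fun ω => ∑ i ∈ t, X i ω) μ := by
  have h := (hind.indepFun_finset s t hst hX).comp
    (Finset.measurable_sum Finset.univ fun i _ => measurable_pi_apply i)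
    (Finset.measurable_sum Finset.univ fun i _ => measurable_pi_apply i)
  convert h using 1 <;> ext ω <;> exact (Finset.sum_coe_sort _ _).symm

variable [IsProbabilityMeasure μ]

theorem abs_measureReal_map_sum_Iic_sub_poisson_le [DecidableEq ι] {X : ι → Ω → ℤ}
    (hX : ∀ i, Measurable (X i)) (h01 : ∀ i ω, X i ω = 0 ∨ X i ω = 1) (hind : iIndepFun X μ)
    (s : Finset ι) {r : ℝ≥0} (hr : 0 < r) (hrs : (r : ℝ) = ∑ i ∈ s, μ.real {ω | X i ω = 1})
    (k : ℤ) :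
    |(μ.map fun ω => ∑ i ∈ s, X i ω).real (Set.Iic k) - Po(ℤ, r).real (Set.Iic k)|
      ≤ (∑ i ∈ s, μ.real {ω | X i ω = 1} ^ 2) / r := by
  rw [map_measureReal_apply (Finset.measurable_sum s fun i _ => hX i) measurableSet_Iic]
  rcases lt_or_ge k 0 with hk | hk
  · have hempty : (fun ω => ∑ i ∈ s, X i ω) ⁻¹' Set.Iic k = ∅ := by
      ext ω
      have := (Finset.mem_Icc.1 (sum_mem_Icc_of_zero_or_one h01 s ω)).1
      simp only [Set.mem_preimage, Set.mem_Iic, Set.mem_empty_iff_false, iff_false, not_le]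
      omega
    rw [hempty, measureReal_empty, poissonMeasure_map_cast_real_Iic_of_neg r hk, sub_zero,
      abs_zero]
    positivity
  · lift k to ℕ using hk
    rw [poissonMeasure_map_cast_real_Iic_natCast]
    exact abs_measureReal_sum_le_sub_poissonCDF_le hX h01 hind s hr hrs k

theorem dKSZ_map_sum_sub_sum_skellam_le [DecidableEq ι] {X : ι → Ω → ℤ}
    (hX : ∀ i, Measurable (X i)) (h01 : ∀ i ω, X i ω = 0 ∨ X i ω = 1) (hind : iIndepFun X μ)
    {s t : Finset ι} (hst : Disjoint s t) (hs : 0 < ∑ i ∈ s, μ.real {ω | X i ω = 1})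
    (ht : 0 < ∑ i ∈ t, μ.real {ω | X i ω = 1}) :
    dKSZ (μ.map fun ω => ∑ i ∈ s, X i ω - ∑ i ∈ t, X i ω)
        (skellamMeasure (∑ i ∈ s, μ.real {ω | X i ω = 1}) (∑ i ∈ t, μ.real {ω | X i ω = 1}))
      ≤ (∑ i ∈ s, μ.real {ω | X i ω = 1} ^ 2) / (∑ i ∈ s, μ.real {ω | X i ω = 1})
        + (∑ i ∈ t, μ.real {ω | X i ω = 1} ^ 2) / (∑ i ∈ t, μ.real {ω | X i ω = 1}) := by
  have hsum (u : Finset ι) : Measurable fun ω => ∑ i ∈ u, X i ω :=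
    Finset.measurable_sum u fun i _ => hX i
  have hpoisson {u : Finset ι} (hu : 0 < ∑ i ∈ u, μ.real {ω | X i ω = 1}) (k : ℤ) := by
    simpa only [Real.coe_toNNReal _ hu.le] using abs_measureReal_map_sum_Iic_sub_poisson_le
      hX h01 hind u (Real.toNNReal_pos.2 hu) (Real.coe_toNNReal _ hu.le) k
  have := Measure.isProbabilityMeasure_map (μ := μ) (hsum s).aemeasurable
  have := Measure.isProbabilityMeasure_map (μ := μ) (hsum t).aemeasurable
  rw [IndepFun.map_sub_eq_map_prod (hsum s) (hsum t) (hind.indepFun_finsetSum_finsetSum hX hst),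
    skellamMeasure_eq_map_prod]
  exact dKSZ_le_of_forall_Iic (abs_measureReal_map_sub_Iic_sub_le (hpoisson hs) (hpoisson ht))

theorem dKSZ_map_sum_sub_sum_one_sub_skellam_le [DecidableEq ι] {X : ι → Ω → ℤ}
    (hX : ∀ i, Measurable (X i)) (h01 : ∀ i ω, X i ω = 0 ∨ X i ω = 1) (hind : iIndepFun X μ)
    {s t : Finset ι} (hst : Disjoint s t) {p q : ℝ}
    (hp : ∀ i ∈ s, μ.real {ω | X i ω = 1} = p) (hq : ∀ i ∈ t, μ.real {ω | X i ω = 1} = 1 - q)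
    (hsp : 0 < s.card * p) (htq : 0 < t.card * q) :
    dKSZ (μ.map fun ω => ∑ i ∈ s, X i ω - ∑ i ∈ t, (1 - X i ω))
        (skellamMeasure (s.card * p) (t.card * q)) ≤ p + q := by
  set Z : ι → Ω → ℤ := fun i ω => if i ∈ t then 1 - X i ω else X i ω
  have hZs : ∀ i ∈ s, Z i = X i := fun i hi => by
    simp [Z, Finset.disjoint_left.1 hst hi]
  have hZt : ∀ i ∈ t, Z i = fun ω => 1 - X i ω := fun i hi => by simp [Z, hi]
  have hZ01 : ∀ i ω, Z i ω = 0 ∨ Z i ω = 1 := fun i ω => by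
    rcases h01 i ω with h | h <;> by_cases hi : i ∈ t <;> simp [Z, h, hi]
  have hZind : iIndepFun Z μ := hind.comp (fun i z => if i ∈ t then 1 - z else z)
    fun _ => .of_discrete
  have hZp : ∀ i ∈ s, μ.real {ω | Z i ω = 1} = p := fun i hi => by rw [hZs i hi, hp i hi]
  have hZq : ∀ i ∈ t, μ.real {ω | Z i ω = 1} = q := fun i hi => by
    have hcompl : {ω | 1 - X i ω = 1} = {ω | X i ω = 1}ᶜ := by
      ext ω
      rcases h01 i ω with h | h <;> simp [h]
    have hmeas : MeasurableSet {ω | X i ω = 1} := hX i (measurableSet_singleton 1)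
    rw [hZt i hi, hcompl, measureReal_compl hmeas, probReal_univ,
      hq i hi, sub_sub_cancel]
  have hD : (fun ω => ∑ i ∈ s, X i ω - ∑ i ∈ t, (1 - X i ω))
      = fun ω => ∑ i ∈ s, Z i ω - ∑ i ∈ t, Z i ω := by
    ext ω
    rw [Finset.sum_congr rfl fun i hi => congrFun (hZs i hi) ω,
      Finset.sum_congr rfl fun i hi => congrFun (hZt i hi) ω]
  have h := dKSZ_map_sum_sub_sum_skellam_le (X := Z)
    (fun i => (Measurable.of_discrete (f := fun z : ℤ => if i ∈ t then 1 - z else z)).comp (hX i))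
    hZ01 hZind hst
  simp only [Finset.sum_congr rfl hZp, Finset.sum_congr rfl hZq,
    Finset.sum_congr rfl fun i hi => congrArg (· ^ 2) (hZp i hi),
    Finset.sum_congr rfl fun i hi => congrArg (· ^ 2) (hZq i hi), Finset.sum_const,
    nsmul_eq_mul] at h
  rw [hD]
  have hs : (s.card : ℝ) ≠ 0 := left_ne_zero_of_mul hsp.ne'
  have ht : (t.card : ℝ) ≠ 0 := left_ne_zero_of_mul htq.ne'
  refine (h hsp htq).trans_eq ?_
  field_simp

end BernoulliSums

end ProbabilityTheory

namespace SimpleGraph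

variable {V : Type*} [DecidableEq V]

lemma card_edgeFinset_add_card_edgeFinset_compl [Fintype V] (G : SimpleGraph V)
    [DecidableRel G.Adj] :
    G.edgeFinset.card + Gᶜ.edgeFinset.card = (Fintype.card V).choose 2 := by
  rw [← card_edgeFinset_top_eq_card_choose_two, ← Finset.card_union_of_disjoint
    (disjoint_edgeFinset.2 disjoint_compl_right), ← edgeFinset_sup]
  congr!
  exact sup_compl_eq_top

lemma sum_edgeFinset_subtype_not_isDiag {M : Type*} [AddCommMonoid M] (G : SimpleGraph V)
    [Fintype G.edgeSet] (f : Sym2 V → M) :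
    ∑ e ∈ G.edgeFinset.subtype (¬ ·.IsDiag), f e = ∑ e ∈ G.edgeFinset, f e :=
  Finset.sum_subtype_of_mem f fun _ he => G.not_isDiag_of_mem_edgeFinset he

lemma card_edgeFinset_subtype_not_isDiag (G : SimpleGraph V) [Fintype G.edgeSet] :
    (G.edgeFinset.subtype (¬ ·.IsDiag)).card = G.edgeFinset.card := by
  simpa only [Finset.card_eq_sum_ones] using G.sum_edgeFinset_subtype_not_isDiag fun _ => 1

lemma disjoint_compl_edgeFinset_subtype_not_isDiag [Fintype V] (G : SimpleGraph V)
    [DecidableRel G.Adj] :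
    Disjoint (Gᶜ.edgeFinset.subtype (¬ ·.IsDiag)) (G.edgeFinset.subtype (¬ ·.IsDiag)) :=
  Finset.disjoint_left.2 fun _ h₁ h₂ => Finset.disjoint_left.1
    (disjoint_edgeFinset.2 disjoint_compl_left) (Finset.mem_subtype.1 h₁) (Finset.mem_subtype.1 h₂)

end SimpleGraph

theorem stmt_7_general {Ω V : Type*} [MeasurableSpace Ω] (μ : Measure Ω) [IsProbabilityMeasure μ]
    [Fintype V] [DecidableEq V]
    (G : SimpleGraph V) [DecidableRel G.Adj]
    (hEc : 1 ≤ Gᶜ.edgeFinset.card)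
    (Y : Sym2 V → Ω → ℤ)
    (hmeas : ∀ e, Measurable (Y e))
    (h01 : ∀ e ω, Y e ω = 0 ∨ Y e ω = 1)
    -- the errors on the distinct vertex pairs are independent
    (hindep : iIndepFun
      (fun e : {e : Sym2 V // ¬ e.IsDiag} => Y e.1) μ)
    (α β : ℝ) (hα : α ∈ Set.Ioo (0 : ℝ) 1)
    (hYα : ∀ e ∈ Gᶜ.edgeFinset, (μ {ω | Y e ω = 1}).toReal = α)
    (hYβ : ∀ e ∈ G.edgeFinset, (μ {ω | Y e ω = 1}).toReal = 1 - β)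
    (lam : ℝ)
    (hlam1 : lam = (Gᶜ.edgeFinset.card : ℝ) * α)
    (hlam2 : lam = (G.edgeFinset.card : ℝ) * β)
    (D : Ω → ℤ)
    (hD : D = fun ω => ∑ e ∈ Gᶜ.edgeFinset, Y e ω - ∑ e ∈ G.edgeFinset, (1 - Y e ω)) :
    dKSZ (μ.map D) (skellamMeasure lam lam) ≤
      ((Fintype.card V : ℝ) * ((Fintype.card V : ℝ) - 1) / 2) * α /
        (G.edgeFinset.card : ℝ) := by
  have hlam : 0 < lam := hlam1 ▸ mul_pos (by exact_mod_cast hEc) hα.1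
  have hE : (G.edgeFinset.card : ℝ) ≠ 0 := left_ne_zero_of_mul (hlam2 ▸ hlam).ne'
  have hDsub : D = fun ω => ∑ e ∈ Gᶜ.edgeFinset.subtype (¬ ·.IsDiag), Y e.1 ω
      - ∑ e ∈ G.edgeFinset.subtype (¬ ·.IsDiag), (1 - Y e.1 ω) := by
    ext ω
    rw [hD, Gᶜ.sum_edgeFinset_subtype_not_isDiag fun e => Y e ω,
      G.sum_edgeFinset_subtype_not_isDiag fun e => 1 - Y e ω]
  have h := dKSZ_map_sum_sub_sum_one_sub_skellam_le (X := fun e ω => Y e.1 ω) (p := α) (q := β)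
    (fun e => hmeas e.1) (fun e => h01 e.1) hindep
    G.disjoint_compl_edgeFinset_subtype_not_isDiag
    (fun e he => by exact hYα e.1 (Finset.mem_subtype.1 he))
    (fun e he => by exact hYβ e.1 (Finset.mem_subtype.1 he))
    (by rwa [SimpleGraph.card_edgeFinset_subtype_not_isDiag, ← hlam1])
    (by rwa [SimpleGraph.card_edgeFinset_subtype_not_isDiag, ← hlam2])
  rw [SimpleGraph.card_edgeFinset_subtype_not_isDiag,
    SimpleGraph.card_edgeFinset_subtype_not_isDiag, ← hlam1, ← hlam2, ← hDsub] at h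
  refine h.trans_eq ?_
  rw [← Nat.cast_choose_two, ← G.card_edgeFinset_add_card_edgeFinset_compl]
  field_simp
  push_cast
  linear_combination hlam1 - hlam2

/-- Under the graph error model with independent measurement errors and
edge unbiasedness `λ = |Eᶜ|α = |E|β`, one has
`d_KS(D_E, Skellam(λ,λ)) ≤ (n_v(n_v−1)/2)·α/|E|`. -/
theorem stmt_7 {Ω V : Type*} [MeasurableSpace Ω] (μ : Measure Ω) [IsProbabilityMeasure μ]
    [Fintype V] [DecidableEq V]
    (G : SimpleGraph V) [DecidableRel G.Adj]
    (hE : 1 ≤ G.edgeFinset.card) (hEc : 1 ≤ Gᶜ.edgeFinset.card)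
    (Y : Sym2 V → Ω → ℤ)
    (hmeas : ∀ e, Measurable (Y e))
    (h01 : ∀ e ω, Y e ω = 0 ∨ Y e ω = 1)
    -- the errors on the distinct vertex pairs are independent
    (hindep : iIndepFun
      (fun e : {e : Sym2 V // ¬ e.IsDiag} => Y e.1) μ)
    (α β : ℝ) (hα : α ∈ Set.Ioo (0 : ℝ) 1) (hβ : β ∈ Set.Ioo (0 : ℝ) 1)
    (hYα : ∀ e ∈ Gᶜ.edgeFinset, (μ {ω | Y e ω = 1}).toReal = α)
    (hYβ : ∀ e ∈ G.edgeFinset, (μ {ω | Y e ω = 1}).toReal = 1 - β)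
    (lam : ℝ)
    (hlam1 : lam = (Gᶜ.edgeFinset.card : ℝ) * α)
    (hlam2 : lam = (G.edgeFinset.card : ℝ) * β)
    (D : Ω → ℤ)
    (hD : D = fun ω => ∑ e ∈ Gᶜ.edgeFinset, Y e ω - ∑ e ∈ G.edgeFinset, (1 - Y e ω)) :
    dKSZ (μ.map D) (skellamMeasure lam lam) ≤
      ((Fintype.card V : ℝ) * ((Fintype.card V : ℝ) - 1) / 2) * α /
        (G.edgeFinset.card : ℝ) :=
  stmt_7_general μ G hEc Y hmeas h01 hindep α β hα hYα hYβ lam hlam1 hlam2 D hD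
end

section
/- Under the graph error model with independent measurement errors and edge unbiasedness λ = |E^c|·α = |E|·β, define the centered, scaled summands ξ_ij = (Y_ij − α)/σ for {i,j} ∈ E^c and ξ_ij = (Y_ij − (1−β))/σ for {i,j} ∈ E, where σ² = α(1−α)|E^c| + β(1−β)|E|. Then Σ_{{i,j}∈V^(2)} E[|ξ_ij|³] ≤ 1 / ( √(2 − (α+β)) · √(α|E^c|) ). -/
open MeasureTheory ProbabilityTheory Real

/-!
Each summand is a centred Bernoulli variable: with `p = P(Y = 1)` its third absolute moment is
`p (1 - p) ((1 - p)² + p²) ≤ p (1 - p)`, so the sum is at most `σ² / σ³ = 1 / σ`. Unbiasedness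
`β |E| = α |Eᶜ|` turns `σ²` into `α |Eᶜ| (2 - (α + β))`.
-/

lemma integral_comp_of_eq_zero_or_eq_one {Ω : Type*} [MeasurableSpace Ω] (μ : Measure Ω)
    [IsProbabilityMeasure μ] {X : Ω → ℤ} (hX : Measurable X) (h01 : ∀ ω, X ω = 0 ∨ X ω = 1)
    (f : ℤ → ℝ) :
    ∫ ω, f (X ω) ∂μ = f 1 * μ.real {ω | X ω = 1} + f 0 * (1 - μ.real {ω | X ω = 1}) := by
  set A : Set Ω := {ω | X ω = 1}
  have hA : MeasurableSet A := hX (measurableSet_singleton 1)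
  have hf : (fun ω => f (X ω))
      = fun ω => A.indicator (fun _ => f 1) ω + Aᶜ.indicator (fun _ => f 0) ω := by
    funext ω
    rcases h01 ω with h | h <;> simp [A, Set.indicator, h]
  rw [hf, integral_add ((integrable_const _).indicator hA) ((integrable_const _).indicator hA.compl),
    integral_indicator_const _ hA, integral_indicator_const _ hA.compl, probReal_compl_eq_one_sub hA,
    smul_eq_mul, smul_eq_mul, mul_comm, mul_comm (1 - _)]

lemma bernoulli_abs_central_moment_three_le {p : ℝ} (hp0 : 0 ≤ p) (hp1 : p ≤ 1) :
    |1 - p| ^ 3 * p + |0 - p| ^ 3 * (1 - p) ≤ p * (1 - p) := by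
  rw [zero_sub, abs_neg, abs_of_nonneg hp0, abs_of_nonneg (sub_nonneg.2 hp1)]
  have hq : 0 ≤ p * (1 - p) := mul_nonneg hp0 (sub_nonneg.2 hp1)
  nlinarith [mul_nonneg hq hq]

lemma integral_abs_sub_div_pow_three_le {Ω : Type*} [MeasurableSpace Ω] (μ : Measure Ω)
    [IsProbabilityMeasure μ] {X : Ω → ℤ} (hX : Measurable X) (h01 : ∀ ω, X ω = 0 ∨ X ω = 1)
    {p σ : ℝ} (hp : μ.real {ω | X ω = 1} = p) (hσ : 0 ≤ σ) :
    ∫ ω, |((X ω : ℝ) - p) / σ| ^ 3 ∂μ ≤ p * (1 - p) / σ ^ 3 := by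
  have hp0 : 0 ≤ p := hp ▸ measureReal_nonneg
  have hp1 : p ≤ 1 := hp ▸ measureReal_le_one
  simp_rw [abs_div, abs_of_nonneg hσ, div_pow]
  rw [integral_div, integral_comp_of_eq_zero_or_eq_one μ hX h01 (fun k => |(k : ℝ) - p| ^ 3), hp]
  gcongr
  exact_mod_cast bernoulli_abs_central_moment_three_le hp0 hp1

lemma sq_div_pow_three (σ : ℝ) : σ ^ 2 / σ ^ 3 = 1 / σ := by
  rcases eq_or_ne σ 0 with rfl | hσ
  · simp
  · field_simp

theorem stmt_9_general {Ω V : Type*} [MeasurableSpace Ω] (μ : Measure Ω) [IsProbabilityMeasure μ]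
    [Fintype V] [DecidableEq V]
    (G : SimpleGraph V) [DecidableRel G.Adj]
    (Y : Sym2 V → Ω → ℤ)
    (hmeas : ∀ e, Measurable (Y e))
    (h01 : ∀ e ω, Y e ω = 0 ∨ Y e ω = 1)
    (α β : ℝ) (hα : α ∈ Set.Ioo (0 : ℝ) 1) (hβ : β ∈ Set.Ioo (0 : ℝ) 1)
    (hYα : ∀ e ∈ Gᶜ.edgeFinset, (μ {ω | Y e ω = 1}).toReal = α)
    (hYβ : ∀ e ∈ G.edgeFinset, (μ {ω | Y e ω = 1}).toReal = 1 - β)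
    (lam : ℝ)
    (hlam1 : lam = (Gᶜ.edgeFinset.card : ℝ) * α)
    (hlam2 : lam = (G.edgeFinset.card : ℝ) * β)
    (σ : ℝ)
    (hσ : σ = Real.sqrt (α * (1 - α) * (Gᶜ.edgeFinset.card : ℝ)
      + β * (1 - β) * (G.edgeFinset.card : ℝ))) :
    (∑ e ∈ Gᶜ.edgeFinset, ∫ ω, |((Y e ω : ℝ) - α) / σ| ^ 3 ∂μ)
      + (∑ e ∈ G.edgeFinset, ∫ ω, |((Y e ω : ℝ) - (1 - β)) / σ| ^ 3 ∂μ) ≤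
      1 / (Real.sqrt (2 - (α + β)) * Real.sqrt (α * (Gᶜ.edgeFinset.card : ℝ))) := by
  set cEc : ℝ := (Gᶜ.edgeFinset.card : ℝ)
  set cE : ℝ := (G.edgeFinset.card : ℝ)
  have hσ0 : 0 ≤ σ := hσ ▸ Real.sqrt_nonneg _
  have hvar : α * (1 - α) * cEc + β * (1 - β) * cE = (2 - (α + β)) * (α * cEc) := by
    linear_combination (1 - β) * (hlam1.symm.trans hlam2).symm
  have hσ_sq : σ ^ 2 = α * (1 - α) * cEc + β * (1 - β) * cE := by
    rw [hσ, Real.sq_sqrt (hvar ▸ mul_nonneg (by linarith [hα.2, hβ.2])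
      (mul_nonneg hα.1.le (Nat.cast_nonneg _)))]
  calc _ ≤ Gᶜ.edgeFinset.card • (α * (1 - α) / σ ^ 3)
        + G.edgeFinset.card • ((1 - β) * (1 - (1 - β)) / σ ^ 3) := by
        gcongr <;> refine Finset.sum_le_card_nsmul _ _ _ fun e he => ?_
        · exact integral_abs_sub_div_pow_three_le μ (hmeas e) (h01 e) (hYα e he) hσ0
        · exact integral_abs_sub_div_pow_three_le μ (hmeas e) (h01 e) (hYβ e he) hσ0
    _ = σ ^ 2 / σ ^ 3 := by rw [hσ_sq, nsmul_eq_mul, nsmul_eq_mul]; ring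
    _ = _ := by
        rw [sq_div_pow_three, hσ, hvar, Real.sqrt_mul (by linarith [hα.2, hβ.2])]

/-- Under the graph error model with independent errors and edge
unbiasedness, the centered scaled summands `ξ_ij` satisfy
`Σ_{{i,j}∈V^(2)} E[|ξ_ij|³] ≤ 1/(√(2−(α+β))·√(α|Eᶜ|))`. -/
theorem stmt_9 {Ω V : Type*} [MeasurableSpace Ω] (μ : Measure Ω) [IsProbabilityMeasure μ]
    [Fintype V] [DecidableEq V]
    (G : SimpleGraph V) [DecidableRel G.Adj]
    (hE : 1 ≤ G.edgeFinset.card) (hEc : 1 ≤ Gᶜ.edgeFinset.card)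
    (Y : Sym2 V → Ω → ℤ)
    (hmeas : ∀ e, Measurable (Y e))
    (h01 : ∀ e ω, Y e ω = 0 ∨ Y e ω = 1)
    (hindep : iIndepFun
      (fun e : {e : Sym2 V // ¬ e.IsDiag} => Y e.1) μ)
    (α β : ℝ) (hα : α ∈ Set.Ioo (0 : ℝ) 1) (hβ : β ∈ Set.Ioo (0 : ℝ) 1)
    (hYα : ∀ e ∈ Gᶜ.edgeFinset, (μ {ω | Y e ω = 1}).toReal = α)
    (hYβ : ∀ e ∈ G.edgeFinset, (μ {ω | Y e ω = 1}).toReal = 1 - β)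
    (lam : ℝ)
    (hlam1 : lam = (Gᶜ.edgeFinset.card : ℝ) * α)
    (hlam2 : lam = (G.edgeFinset.card : ℝ) * β)
    (σ : ℝ)
    (hσ : σ = Real.sqrt (α * (1 - α) * (Gᶜ.edgeFinset.card : ℝ)
      + β * (1 - β) * (G.edgeFinset.card : ℝ))) :
    (∑ e ∈ Gᶜ.edgeFinset, ∫ ω, |((Y e ω : ℝ) - α) / σ| ^ 3 ∂μ)
      + (∑ e ∈ G.edgeFinset, ∫ ω, |((Y e ω : ℝ) - (1 - β)) / σ| ^ 3 ∂μ) ≤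
      1 / (Real.sqrt (2 - (α + β)) * Real.sqrt (α * (Gᶜ.edgeFinset.card : ℝ))) :=
  stmt_9_general μ G Y hmeas h01 α β hα hβ hYα hYβ lam hlam1 hlam2 σ hσ
end

section
/- Under the graph error model with independent measurement errors, edge unbiasedness λ = |E^c|·α = |E|·β, and additionally α, β < 1/2, define ξ_ij = (Y_ij − α)/σ for {i,j} ∈ E^c and ξ_ij = (Y_ij − (1−β))/σ for {i,j} ∈ E, where σ² = α(1−α)|E^c| + β(1−β)|E|, and set ε = 1/(2σ). Then ((1 − e^{−ε²/4})/40) · Σ_{{i,j}∈V^(2)} E[ξ_ij² · 1{|ξ_ij| > ε}] − Σ_{{i,j}∈V^(2)} (E[ξ_ij²])² ≥ (2 − (α+β))^{−2} · [ (1−α)² ( e^{−ε²/4}/(640·α|E^c|) − 1/|E^c| ) + (1−β)² ( e^{−ε²/4}/(640·α|E^c|) − 1/|E| ) ]. -/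
open MeasureTheory ProbabilityTheory Real

/-!
Each `ξ e` is a rescaled centred Bernoulli variable `(Y - p) / σ` with `p = α` off the graph and
`p = 1 - β` on it, so `E ξ² = p (1 - p) / σ²`; as `ε = 1 / (2σ)` and `p ≠ 1/2`, the truncation
`|ξ| > ε` keeps exactly the one of its two values of larger modulus. Unbiasedness gives
`σ² = λ (2 - (α + β))`, after which the difference of the two sides factors as
`λ ((1 - α)² + (1 - β)²) / σ⁴ · ((1 - e^{-ε²/4}) σ² / 40 - e^{-ε²/4} / 640)`, and the last factor
is nonnegative by `e^x ≥ 1 + x` at `x = ε² / 4`.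
-/

section Bernoulli

variable {Ω : Type*} [MeasurableSpace Ω] {μ : Measure Ω} [IsProbabilityMeasure μ]
  {Y : Ω → ℤ} {p σ : ℝ} {ξ : Ω → ℝ}

lemma integral_comp_of_forall_eq_zero_or_one (hY : Measurable Y)
    (h01 : ∀ ω, Y ω = 0 ∨ Y ω = 1) (f : ℤ → ℝ) :
    ∫ ω, f (Y ω) ∂μ = μ.real {ω | Y ω = 1} * f 1 + (1 - μ.real {ω | Y ω = 1}) * f 0 := by
  have hS : MeasurableSet {ω | Y ω = 1} := hY (measurableSet_singleton 1)
  have hf : (fun ω => f (Y ω)) = fun ω => f 0 + {ω | Y ω = 1}.indicator (fun _ => f 1 - f 0) ω := by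
    funext ω
    rcases h01 ω with h | h <;> simp [h]
  rw [hf, integral_add (integrable_const _) ((integrable_const _).indicator hS),
    integral_const, integral_indicator_const _ hS]
  simp only [probReal_univ, smul_eq_mul]
  ring

lemma integral_sq_centered_of_forall_eq_zero_or_one (hY : Measurable Y)
    (h01 : ∀ ω, Y ω = 0 ∨ Y ω = 1) (hp : μ.real {ω | Y ω = 1} = p) (hσ : σ ≠ 0)
    (hξ : ∀ ω, ξ ω = (Y ω - p) / σ) :
    ∫ ω, ξ ω ^ 2 ∂μ = p * (1 - p) / σ ^ 2 := by
  simp_rw [hξ]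
  rw [integral_comp_of_forall_eq_zero_or_one hY h01 (fun k => (((k : ℝ) - p) / σ) ^ 2), hp]
  field_simp
  push_cast
  ring

lemma one_div_two_mul_lt_abs_div_iff (hσ : 0 < σ) (x : ℝ) :
    1 / (2 * σ) < |x / σ| ↔ 1 / 2 < |x| := by
  rw [show 1 / (2 * σ) = 1 / 2 / σ by ring, abs_div, abs_of_pos hσ,
    div_lt_div_iff_of_pos_right hσ]

lemma integral_truncated_sq_centered_of_lt_half (hY : Measurable Y)
    (h01 : ∀ ω, Y ω = 0 ∨ Y ω = 1) (hp : μ.real {ω | Y ω = 1} = p) (hp2 : p < 1 / 2) (hσ : 0 < σ)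
    (hξ : ∀ ω, ξ ω = (Y ω - p) / σ) :
    ∫ ω, (if 1 / (2 * σ) < |ξ ω| then ξ ω ^ 2 else 0) ∂μ = p * (1 - p) ^ 2 / σ ^ 2 := by
  have hp0 : 0 ≤ p := hp ▸ measureReal_nonneg
  simp_rw [hξ]
  rw [integral_comp_of_forall_eq_zero_or_one hY h01
    (fun k => if 1 / (2 * σ) < |((k : ℝ) - p) / σ| then (((k : ℝ) - p) / σ) ^ 2 else 0), hp]
  simp only [one_div_two_mul_lt_abs_div_iff hσ, Int.cast_one, Int.cast_zero, zero_sub, abs_neg,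
    abs_of_nonneg hp0, abs_of_pos (by linarith : (0 : ℝ) < 1 - p),
    if_pos (by linarith : (1 : ℝ) / 2 < 1 - p), if_neg (by linarith : ¬ (1 : ℝ) / 2 < p)]
  ring

lemma integral_truncated_sq_centered_of_half_lt (hY : Measurable Y)
    (h01 : ∀ ω, Y ω = 0 ∨ Y ω = 1) (hp : μ.real {ω | Y ω = 1} = p) (hp2 : 1 / 2 < p) (hσ : 0 < σ)
    (hξ : ∀ ω, ξ ω = (Y ω - p) / σ) :
    ∫ ω, (if 1 / (2 * σ) < |ξ ω| then ξ ω ^ 2 else 0) ∂μ = (1 - p) * p ^ 2 / σ ^ 2 := by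
  have hp1 : p ≤ 1 := hp ▸ measureReal_le_one
  simp_rw [hξ]
  rw [integral_comp_of_forall_eq_zero_or_one hY h01
    (fun k => if 1 / (2 * σ) < |((k : ℝ) - p) / σ| then (((k : ℝ) - p) / σ) ^ 2 else 0), hp]
  simp only [one_div_two_mul_lt_abs_div_iff hσ, Int.cast_one, Int.cast_zero, zero_sub, abs_neg,
    abs_of_pos (by linarith : (0 : ℝ) < p), abs_of_nonneg (by linarith : (0 : ℝ) ≤ 1 - p),
    if_neg (by linarith : ¬ (1 : ℝ) / 2 < 1 - p), if_pos hp2]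
  ring

end Bernoulli

lemma exp_neg_mul_one_add_le_one (x : ℝ) : exp (-x) * (1 + x) ≤ 1 := by
  calc exp (-x) * (1 + x) ≤ exp (-x) * exp x := by gcongr; linarith [add_one_le_exp x]
    _ = 1 := by rw [← exp_add, neg_add_cancel, exp_zero]

section Algebra

variable {α β m n σ : ℝ}

lemma two_sub_add_mul_eq (hlam : m * α = n * β) :
    (2 - (α + β)) * (m * α) = α * (1 - α) * m + β * (1 - β) * n := by
  linear_combination (1 - β) * hlam

lemma lower_bound_of_bernoulli_moments (hα : 0 < α) (hm : 0 < m) (hn : 0 < n) (hσ : 0 < σ)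
    (hlam : m * α = n * β) (hσ2 : σ ^ 2 = α * (1 - α) * m + β * (1 - β) * n) {ε : ℝ}
    (hε : ε = 1 / (2 * σ)) :
    ((1 - exp (-(ε ^ 2) / 4)) / 40) *
        (m * (α * (1 - α) ^ 2 / σ ^ 2) + n * (β * (1 - β) ^ 2 / σ ^ 2))
      - (m * (α * (1 - α) / σ ^ 2) ^ 2 + n * (β * (1 - β) / σ ^ 2) ^ 2) ≥
      (2 - (α + β))⁻¹ ^ 2 *
        ((1 - α) ^ 2 * (exp (-(ε ^ 2) / 4) / (640 * (α * m)) - 1 / m)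
          + (1 - β) ^ 2 * (exp (-(ε ^ 2) / 4) / (640 * (α * m)) - 1 / n)) := by
  set E := exp (-(ε ^ 2) / 4)
  have hinv : (2 - (α + β))⁻¹ = m * α / σ ^ 2 := by
    have hprod := (two_sub_add_mul_eq hlam).trans hσ2.symm
    have : 2 - (α + β) ≠ 0 := by rintro h; rw [h, zero_mul] at hprod; nlinarith
    rw [← hprod]; field_simp
  have hgap : E / 640 ≤ (1 - E) / 40 * σ ^ 2 := by
    have h := exp_neg_mul_one_add_le_one (ε ^ 2 / 4)
    rw [← neg_div] at h
    have hεσ : ε ^ 2 * σ ^ 2 = 1 / 4 := by rw [hε]; field_simp; ring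
    nlinarith [mul_le_mul_of_nonneg_left h (sq_nonneg σ)]
  obtain rfl : β = m * α / n := by field_simp; linarith
  rw [hinv, ge_iff_le, ← sub_nonneg]
  calc 0 ≤ m * α * ((1 - α) ^ 2 + (1 - m * α / n) ^ 2) / σ ^ 4
          * ((1 - E) / 40 * σ ^ 2 - E / 640) := by
        have := sub_nonneg.2 hgap; positivity
    _ = _ := by field_simp; ring

end Algebra

theorem stmt_10_general {Ω V : Type*} [MeasurableSpace Ω] (μ : Measure Ω) [IsProbabilityMeasure μ]
    [Fintype V] [DecidableEq V]
    (G : SimpleGraph V) [DecidableRel G.Adj]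
    (hE : 1 ≤ G.edgeFinset.card) (hEc : 1 ≤ Gᶜ.edgeFinset.card)
    (Y : Sym2 V → Ω → ℤ)
    (hmeas : ∀ e, Measurable (Y e))
    (h01 : ∀ e ω, Y e ω = 0 ∨ Y e ω = 1)
    (α β : ℝ) (hα : α ∈ Set.Ioo (0 : ℝ) 1)
    (hα2 : α < 1 / 2) (hβ2 : β < 1 / 2)
    (hYα : ∀ e ∈ Gᶜ.edgeFinset, (μ {ω | Y e ω = 1}).toReal = α)
    (hYβ : ∀ e ∈ G.edgeFinset, (μ {ω | Y e ω = 1}).toReal = 1 - β)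
    (lam : ℝ)
    (hlam1 : lam = (Gᶜ.edgeFinset.card : ℝ) * α)
    (hlam2 : lam = (G.edgeFinset.card : ℝ) * β)
    (σ : ℝ)
    (hσ : σ = Real.sqrt (α * (1 - α) * (Gᶜ.edgeFinset.card : ℝ)
      + β * (1 - β) * (G.edgeFinset.card : ℝ)))
    (ξ : Sym2 V → Ω → ℝ)
    (hξc : ∀ e ∈ Gᶜ.edgeFinset, ∀ ω, ξ e ω = ((Y e ω : ℝ) - α) / σ)
    (hξe : ∀ e ∈ G.edgeFinset, ∀ ω, ξ e ω = ((Y e ω : ℝ) - (1 - β)) / σ)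
    (ε : ℝ) (hε : ε = 1 / (2 * σ)) :
    ((1 - Real.exp (-(ε ^ 2) / 4)) / 40) *
        ((∑ e ∈ Gᶜ.edgeFinset, ∫ ω, (if ε < |ξ e ω| then (ξ e ω) ^ 2 else 0) ∂μ)
          + (∑ e ∈ G.edgeFinset, ∫ ω, (if ε < |ξ e ω| then (ξ e ω) ^ 2 else 0) ∂μ))
      - ((∑ e ∈ Gᶜ.edgeFinset, (∫ ω, (ξ e ω) ^ 2 ∂μ) ^ 2)
          + (∑ e ∈ G.edgeFinset, (∫ ω, (ξ e ω) ^ 2 ∂μ) ^ 2)) ≥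
      (2 - (α + β))⁻¹ ^ 2 *
        ((1 - α) ^ 2 *
            (Real.exp (-(ε ^ 2) / 4) / (640 * (α * (Gᶜ.edgeFinset.card : ℝ)))
              - 1 / (Gᶜ.edgeFinset.card : ℝ))
          + (1 - β) ^ 2 *
            (Real.exp (-(ε ^ 2) / 4) / (640 * (α * (Gᶜ.edgeFinset.card : ℝ)))
              - 1 / (G.edgeFinset.card : ℝ))) := by
  subst hε
  have hm : (0 : ℝ) < Gᶜ.edgeFinset.card := by exact_mod_cast hEc
  have hn : (0 : ℝ) < G.edgeFinset.card := by exact_mod_cast hE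
  have hlam : (Gᶜ.edgeFinset.card : ℝ) * α = G.edgeFinset.card * β := hlam1.symm.trans hlam2
  have hS : 0 < α * (1 - α) * (Gᶜ.edgeFinset.card : ℝ) + β * (1 - β) * G.edgeFinset.card := by
    rw [← two_sub_add_mul_eq hlam]
    exact mul_pos (by linarith) (mul_pos hm hα.1)
  have hσ0 : 0 < σ := hσ ▸ sqrt_pos.2 hS
  have hσ2 : σ ^ 2 = α * (1 - α) * Gᶜ.edgeFinset.card + β * (1 - β) * G.edgeFinset.card := by
    rw [hσ, sq_sqrt hS.le]
  have htrunc_c : ∑ e ∈ Gᶜ.edgeFinset, ∫ ω, (if 1 / (2 * σ) < |ξ e ω| then ξ e ω ^ 2 else 0) ∂μ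
      = Gᶜ.edgeFinset.card * (α * (1 - α) ^ 2 / σ ^ 2) := by
    rw [Finset.sum_eq_card_nsmul fun e he => integral_truncated_sq_centered_of_lt_half
      (hmeas e) (h01 e) (hYα e he) hα2 hσ0 (hξc e he), nsmul_eq_mul]
  have htrunc_e : ∑ e ∈ G.edgeFinset, ∫ ω, (if 1 / (2 * σ) < |ξ e ω| then ξ e ω ^ 2 else 0) ∂μ
      = G.edgeFinset.card * (β * (1 - β) ^ 2 / σ ^ 2) := by
    rw [Finset.sum_eq_card_nsmul fun e he => integral_truncated_sq_centered_of_half_lt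
      (hmeas e) (h01 e) (hYβ e he) (by linarith) hσ0 (hξe e he), nsmul_eq_mul, sub_sub_cancel]
  have hvar_c : ∑ e ∈ Gᶜ.edgeFinset, (∫ ω, ξ e ω ^ 2 ∂μ) ^ 2
      = Gᶜ.edgeFinset.card * (α * (1 - α) / σ ^ 2) ^ 2 := by
    rw [Finset.sum_eq_card_nsmul fun e he => by rw [integral_sq_centered_of_forall_eq_zero_or_one
      (hmeas e) (h01 e) (hYα e he) hσ0.ne' (hξc e he)], nsmul_eq_mul]
  have hvar_e : ∑ e ∈ G.edgeFinset, (∫ ω, ξ e ω ^ 2 ∂μ) ^ 2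
      = G.edgeFinset.card * (β * (1 - β) / σ ^ 2) ^ 2 := by
    rw [Finset.sum_eq_card_nsmul fun e he => by rw [integral_sq_centered_of_forall_eq_zero_or_one
      (hmeas e) (h01 e) (hYβ e he) hσ0.ne' (hξe e he), sub_sub_cancel, mul_comm], nsmul_eq_mul]
  rw [htrunc_c, htrunc_e, hvar_c, hvar_e]
  exact lower_bound_of_bernoulli_moments hα.1 hm hn hσ0 hlam hσ2 rfl

/-- Under the graph error model with independent errors, edge
unbiasedness, and `α, β < 1/2`, the lower-bound quantity from Stein's method for the
normal is bounded below as stated. -/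
theorem stmt_10 {Ω V : Type*} [MeasurableSpace Ω] (μ : Measure Ω) [IsProbabilityMeasure μ]
    [Fintype V] [DecidableEq V]
    (G : SimpleGraph V) [DecidableRel G.Adj]
    (hE : 1 ≤ G.edgeFinset.card) (hEc : 1 ≤ Gᶜ.edgeFinset.card)
    (Y : Sym2 V → Ω → ℤ)
    (hmeas : ∀ e, Measurable (Y e))
    (h01 : ∀ e ω, Y e ω = 0 ∨ Y e ω = 1)
    (hindep : iIndepFun
      (fun e : {e : Sym2 V // ¬ e.IsDiag} => Y e.1) μ)
    (α β : ℝ) (hα : α ∈ Set.Ioo (0 : ℝ) 1) (hβ : β ∈ Set.Ioo (0 : ℝ) 1)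
    (hα2 : α < 1 / 2) (hβ2 : β < 1 / 2)
    (hYα : ∀ e ∈ Gᶜ.edgeFinset, (μ {ω | Y e ω = 1}).toReal = α)
    (hYβ : ∀ e ∈ G.edgeFinset, (μ {ω | Y e ω = 1}).toReal = 1 - β)
    (lam : ℝ)
    (hlam1 : lam = (Gᶜ.edgeFinset.card : ℝ) * α)
    (hlam2 : lam = (G.edgeFinset.card : ℝ) * β)
    (σ : ℝ)
    (hσ : σ = Real.sqrt (α * (1 - α) * (Gᶜ.edgeFinset.card : ℝ)
      + β * (1 - β) * (G.edgeFinset.card : ℝ)))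
    (ξ : Sym2 V → Ω → ℝ)
    (hξc : ∀ e ∈ Gᶜ.edgeFinset, ∀ ω, ξ e ω = ((Y e ω : ℝ) - α) / σ)
    (hξe : ∀ e ∈ G.edgeFinset, ∀ ω, ξ e ω = ((Y e ω : ℝ) - (1 - β)) / σ)
    (ε : ℝ) (hε : ε = 1 / (2 * σ)) :
    ((1 - Real.exp (-(ε ^ 2) / 4)) / 40) *
        ((∑ e ∈ Gᶜ.edgeFinset, ∫ ω, (if ε < |ξ e ω| then (ξ e ω) ^ 2 else 0) ∂μ)
          + (∑ e ∈ G.edgeFinset, ∫ ω, (if ε < |ξ e ω| then (ξ e ω) ^ 2 else 0) ∂μ))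
      - ((∑ e ∈ Gᶜ.edgeFinset, (∫ ω, (ξ e ω) ^ 2 ∂μ) ^ 2)
          + (∑ e ∈ G.edgeFinset, (∫ ω, (ξ e ω) ^ 2 ∂μ) ^ 2)) ≥
      (2 - (α + β))⁻¹ ^ 2 *
        ((1 - α) ^ 2 *
            (Real.exp (-(ε ^ 2) / 4) / (640 * (α * (Gᶜ.edgeFinset.card : ℝ)))
              - 1 / (Gᶜ.edgeFinset.card : ℝ))
          + (1 - β) ^ 2 *
            (Real.exp (-(ε ^ 2) / 4) / (640 * (α * (Gᶜ.edgeFinset.card : ℝ)))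
              - 1 / (G.edgeFinset.card : ℝ))) :=
  stmt_10_general μ G hE hEc Y hmeas h01 α β hα hα2 hβ2 hYα hYβ lam hlam1 hlam2 σ hσ ξ hξc hξe ε hε
end

section
/- Let n ≥ 2 be an integer, π ∈ (0,1), and ν ∈ ℝ. Define μ on {0,1}^n by μ(x) = P(S = |x|)/C(n,|x|), where S ~ COMB(n,π,ν) and |x| = Σ_{i=1}^n x_i. Then μ is log-supermodular, i.e. μ(x)μ(x') ≤ μ(x∧x')μ(x∨x') for all x, x' ∈ {0,1}^n (where ∧ and ∨ denote elementwise minimum and maximum), if and only if ν ≤ 1. -/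
open MeasureTheory ProbabilityTheory Real

open Finset in
lemma comb_step (n c e : ℕ) (hce : c ≤ e) (hen : e + 1 ≤ n) :
    n.choose c * n.choose (e+1) ≤ n.choose (c+1) * n.choose e := by
  have h1 : n.choose (e+1) * (e+1) = n.choose e * (n - e) := Nat.choose_succ_right_eq n e
  have h2 : n.choose (c+1) * (c+1) = n.choose c * (n - c) := Nat.choose_succ_right_eq n c
  have h3 : n - e ≤ n - c := Nat.sub_le_sub_left hce n
  have key : (n.choose c * n.choose (e+1)) * ((e+1)*(c+1))
      ≤ (n.choose (c+1) * n.choose e) * ((e+1)*(c+1)) := by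
    calc (n.choose c * n.choose (e+1)) * ((e+1)*(c+1))
        = n.choose c * (n.choose (e+1) * (e+1)) * (c+1) := by ring
      _ = n.choose c * (n.choose e * (n-e)) * (c+1) := by rw [h1]
      _ = (n.choose c * n.choose e) * ((n-e)*(c+1)) := by ring
      _ ≤ (n.choose c * n.choose e) * ((n-c)*(e+1)) :=
          Nat.mul_le_mul_left _ (Nat.mul_le_mul h3 (by omega))
      _ = (n.choose c * (n-c)) * n.choose e * (e+1) := by ring
      _ = (n.choose (c+1) * (c+1)) * n.choose e * (e+1) := by rw [h2]
      _ = (n.choose (c+1) * n.choose e) * ((e+1)*(c+1)) := by ring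
  exact Nat.le_of_mul_le_mul_right key (by positivity)

lemma comb_prod_le (n : ℕ) : ∀ (j c d : ℕ), c + 2*j ≤ d → d ≤ n →
    n.choose c * n.choose d ≤ n.choose (c+j) * n.choose (d-j) := by
  intro j
  induction j with
  | zero => intro c d _ _; simp
  | succ j ih =>
    intro c d h hdn
    obtain ⟨e, rfl⟩ : ∃ e, d = e + 1 := ⟨d-1, by omega⟩
    have h1 : n.choose c * n.choose (e+1) ≤ n.choose (c+1) * n.choose e :=
      comb_step n c e (by omega) (by omega)
    have h2 := ih (c+1) e (by omega) (by omega)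
    calc n.choose c * n.choose (e+1) ≤ n.choose (c+1) * n.choose e := h1
      _ ≤ n.choose (c+1+j) * n.choose (e-j) := h2
      _ = n.choose (c+(j+1)) * n.choose (e+1-(j+1)) := by
          congr 2 <;> omega

lemma key_ineq (n : ℕ) (π' S : ℝ) (hπ1 : 0 < π') (hπ2 : π' < 1) (hS : 0 < S) (ν : ℝ)
    (hν : ν ≤ 1) (a b c d : ℕ) (han : a ≤ n) (hbn : b ≤ n) (hcn : c ≤ n) (hdn : d ≤ n)
    (hsum : c + d = a + b)
    (hcd : (n.choose c : ℝ) * (n.choose d : ℝ) ≤ (n.choose a : ℝ) * (n.choose b : ℝ)) :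
    (π' ^ a * (1 - π') ^ (n - a) * ((n.choose a : ℝ)) ^ ν / S / ((n.choose a : ℝ))) *
      (π' ^ b * (1 - π') ^ (n - b) * ((n.choose b : ℝ)) ^ ν / S / ((n.choose b : ℝ))) ≤
    (π' ^ c * (1 - π') ^ (n - c) * ((n.choose c : ℝ)) ^ ν / S / ((n.choose c : ℝ))) *
      (π' ^ d * (1 - π') ^ (n - d) * ((n.choose d : ℝ)) ^ ν / S / ((n.choose d : ℝ))) := by
  have hq : (0:ℝ) < 1 - π' := by linarith
  have hCa : (0:ℝ) < (n.choose a : ℝ) := by exact_mod_cast Nat.choose_pos han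
  have hCb : (0:ℝ) < (n.choose b : ℝ) := by exact_mod_cast Nat.choose_pos hbn
  have hCc : (0:ℝ) < (n.choose c : ℝ) := by exact_mod_cast Nat.choose_pos hcn
  have hCd : (0:ℝ) < (n.choose d : ℝ) := by exact_mod_cast Nat.choose_pos hdn
  have ident : ∀ k : ℕ, k ≤ n →
      π' ^ k * (1 - π') ^ (n - k) * ((n.choose k : ℝ)) ^ ν / S / ((n.choose k : ℝ))
        = π' ^ k * (1 - π') ^ (n - k) * ((n.choose k : ℝ)) ^ (ν - 1) / S := by
    intro k hk
    have hC : (0:ℝ) < (n.choose k : ℝ) := by exact_mod_cast Nat.choose_pos hk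
    rw [Real.rpow_sub hC, Real.rpow_one]
    field_simp
  rw [ident a han, ident b hbn, ident c hcn, ident d hdn]
  have eL : π' ^ a * (1 - π') ^ (n - a) * ((n.choose a : ℝ)) ^ (ν-1) / S *
      (π' ^ b * (1 - π') ^ (n - b) * ((n.choose b : ℝ)) ^ (ν-1) / S)
      = π' ^ (a+b) * (1 - π') ^ ((n-a)+(n-b)) *
        (((n.choose a : ℝ)) * ((n.choose b : ℝ))) ^ (ν-1) / S^2 := by
    rw [Real.mul_rpow hCa.le hCb.le, pow_add, pow_add]; ring
  have eR : π' ^ c * (1 - π') ^ (n - c) * ((n.choose c : ℝ)) ^ (ν-1) / S *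
      (π' ^ d * (1 - π') ^ (n - d) * ((n.choose d : ℝ)) ^ (ν-1) / S)
      = π' ^ (c+d) * (1 - π') ^ ((n-c)+(n-d)) *
        (((n.choose c : ℝ)) * ((n.choose d : ℝ))) ^ (ν-1) / S^2 := by
    rw [Real.mul_rpow hCc.le hCd.le, pow_add, pow_add]; ring
  rw [eL, eR]
  have hexp : (n-a)+(n-b) = (n-c)+(n-d) := by omega
  have hsum' : a + b = c + d := hsum.symm
  rw [hexp, hsum']
  have hkey : (((n.choose a : ℝ)) * ((n.choose b : ℝ))) ^ (ν-1)
      ≤ (((n.choose c : ℝ)) * ((n.choose d : ℝ))) ^ (ν-1) :=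
    Real.rpow_le_rpow_of_nonpos (by positivity) hcd (by linarith)
  have hpos : (0:ℝ) < π' ^ (c+d) * (1 - π') ^ ((n-c)+(n-d)) := by positivity
  have := mul_le_mul_of_nonneg_left hkey hpos.le
  calc π' ^ (c+d) * (1 - π') ^ ((n-c)+(n-d)) * ((n.choose a : ℝ) * (n.choose b : ℝ)) ^ (ν-1) / S^2
      ≤ π' ^ (c+d) * (1 - π') ^ ((n-c)+(n-d)) * ((n.choose c : ℝ) * (n.choose d : ℝ)) ^ (ν-1) / S^2 := by
        exact div_le_div_of_nonneg_right this (by positivity)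
    _ = _ := rfl

/-- The exchangeable distribution on `{0,1}^n` induced by the
Conway–Maxwell binomial distribution `COMB(n, π, ν)` is log-supermodular iff `ν ≤ 1`. -/
theorem stmt_14 (n : ℕ) (hn : 2 ≤ n) (π' : ℝ) (hπ : π' ∈ Set.Ioo (0 : ℝ) 1) (ν : ℝ)
    (S : ℝ)
    (hS : S = ∑ k ∈ Finset.range (n + 1),
      π' ^ k * (1 - π') ^ (n - k) * ((n.choose k : ℝ)) ^ ν)
    (P : ℕ → ℝ)
    (hP : ∀ k, P k = π' ^ k * (1 - π') ^ (n - k) * ((n.choose k : ℝ)) ^ ν / S)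
    (μ : (Fin n → Bool) → ℝ)
    (hμ : ∀ x, μ x = P (Finset.univ.filter (fun i => x i = true)).card /
      ((n.choose (Finset.univ.filter (fun i => x i = true)).card : ℝ))) :
    (∀ x x' : Fin n → Bool,
        μ x * μ x' ≤ μ (fun i => x i && x' i) * μ (fun i => x i || x' i))
      ↔ ν ≤ 1 := by
  obtain ⟨hπ1, hπ2⟩ := hπ
  have hq : (0:ℝ) < 1 - π' := by linarith
  have hSpos : 0 < S := by
    rw [hS]
    apply Finset.sum_pos
    · intro k hk
      have hk' : k ≤ n := by
        simp only [Finset.mem_range] at hk; omega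
      have hC : (0:ℝ) < (n.choose k : ℝ) := by exact_mod_cast Nat.choose_pos hk'
      positivity
    · exact ⟨0, by simp⟩
  constructor
  · -- log-supermodular → ν ≤ 1
    intro h
    by_contra hν
    push_neg at hν
    set i0 : Fin n := ⟨0, by omega⟩
    set i1 : Fin n := ⟨1, by omega⟩
    have hne : i0 ≠ i1 := by simp [i0, i1, Fin.ext_iff]
    set x : Fin n → Bool := fun i => decide (i = i0) with hx
    set x' : Fin n → Bool := fun i => decide (i = i1) with hx'
    have c1 : (Finset.univ.filter (fun i => x i = true)).card = 1 := by
      have : Finset.univ.filter (fun i => x i = true) = {i0} := by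
        ext i; simp [hx]
      rw [this, Finset.card_singleton]
    have c2 : (Finset.univ.filter (fun i => x' i = true)).card = 1 := by
      have : Finset.univ.filter (fun i => x' i = true) = {i1} := by
        ext i; simp [hx']
      rw [this, Finset.card_singleton]
    have c3 : (Finset.univ.filter (fun i => (x i && x' i) = true)).card = 0 := by
      have : Finset.univ.filter (fun i => (x i && x' i) = true) = ∅ := by
        ext i
        simp only [Finset.mem_filter, Finset.mem_univ, true_and, Bool.and_eq_true,
          Finset.notMem_empty, iff_false, hx, hx', decide_eq_true_eq, not_and]
        rintro rfl h'
        exact hne h'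
      rw [this, Finset.card_empty]
    have c4 : (Finset.univ.filter (fun i => (x i || x' i) = true)).card = 2 := by
      have : Finset.univ.filter (fun i => (x i || x' i) = true) = {i0, i1} := by
        ext i
        simp [hx, hx', Bool.or_eq_true]
      rw [this, Finset.card_pair hne]
    have hinst := h x x'
    rw [hμ x, hμ x', hμ _, hμ _, c1, c2, c3, c4, hP 1, hP 0, hP 2] at hinst
    -- now pure arithmetic
    have hN : (0:ℝ) < (n:ℝ) := by positivity
    have hC2 : (0:ℝ) < (n.choose 2 : ℝ) := by
      exact_mod_cast Nat.choose_pos (by omega)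
    have hC2lt : (n.choose 2 : ℝ) < (n:ℝ) * (n:ℝ) := by
      have : n.choose 2 < n * n := by
        rw [Nat.choose_two_right]
        calc n * (n-1) / 2 ≤ n * (n-1) := Nat.div_le_self _ _
          _ < n * n := (Nat.mul_lt_mul_left (show 0 < n by omega)).mpr (by omega)
      exact_mod_cast this
    have hkey : (n.choose 2 : ℝ) ^ (ν - 1) < ((n:ℝ) * (n:ℝ)) ^ (ν - 1) :=
      Real.rpow_lt_rpow hC2.le hC2lt (by linarith)
    have eL : π' ^ 1 * (1 - π') ^ (n - 1) * ((n.choose 1 : ℝ)) ^ ν / S / ((n.choose 1 : ℝ)) *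
        (π' ^ 1 * (1 - π') ^ (n - 1) * ((n.choose 1 : ℝ)) ^ ν / S / ((n.choose 1 : ℝ)))
        = π' ^ 2 * (1 - π') ^ ((n-1)+(n-1)) * ((n:ℝ) * (n:ℝ)) ^ (ν - 1) / S ^ 2 := by
      rw [Nat.choose_one_right, Real.mul_rpow hN.le hN.le, Real.rpow_sub hN, Real.rpow_one,
        pow_add]
      field_simp
    have eR : π' ^ 0 * (1 - π') ^ (n - 0) * ((n.choose 0 : ℝ)) ^ ν / S / ((n.choose 0 : ℝ)) *
        (π' ^ 2 * (1 - π') ^ (n - 2) * ((n.choose 2 : ℝ)) ^ ν / S / ((n.choose 2 : ℝ)))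
        = π' ^ 2 * (1 - π') ^ ((n-1)+(n-1)) * ((n.choose 2 : ℝ)) ^ (ν - 1) / S ^ 2 := by
      have e0 : ((n.choose 0 : ℕ) : ℝ) = 1 := by norm_num
      rw [e0, Real.rpow_sub hC2, Real.rpow_one, Real.one_rpow]
      have eq : (1-π')^((n-1)+(n-1)) = (1-π')^(n-0) * (1-π')^(n-2) := by
        rw [← pow_add]; congr 1; omega
      rw [eq]
      field_simp
    rw [eL, eR] at hinst
    have hfac : (0:ℝ) < π' ^ 2 * (1 - π') ^ ((n-1)+(n-1)) / S ^ 2 := by positivity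
    have h1 : π' ^ 2 * (1 - π') ^ ((n-1)+(n-1)) * ((n:ℝ) * (n:ℝ)) ^ (ν - 1) / S ^ 2
        = (π' ^ 2 * (1 - π') ^ ((n-1)+(n-1)) / S ^ 2) * ((n:ℝ) * (n:ℝ)) ^ (ν - 1) := by ring
    have h2 : π' ^ 2 * (1 - π') ^ ((n-1)+(n-1)) * ((n.choose 2 : ℝ)) ^ (ν - 1) / S ^ 2
        = (π' ^ 2 * (1 - π') ^ ((n-1)+(n-1)) / S ^ 2) * ((n.choose 2 : ℝ)) ^ (ν - 1) := by ring
    rw [h1, h2] at hinst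
    have := le_of_mul_le_mul_left hinst hfac
    linarith
  · -- ν ≤ 1 → log-supermodular
    intro hν x x'
    set A := Finset.univ.filter (fun i => x i = true) with hA
    set B := Finset.univ.filter (fun i => x' i = true) with hB
    have hand : Finset.univ.filter (fun i => (x i && x' i) = true) = A ∩ B := by
      ext i; simp [hA, hB, Bool.and_eq_true]
    have hor : Finset.univ.filter (fun i => (x i || x' i) = true) = A ∪ B := by
      ext i; simp [hA, hB, Bool.or_eq_true]
    rw [hμ x, hμ x', hμ _, hμ _, hand, hor]
    set a := A.card
    set b := B.card
    set c := (A ∩ B).card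
    set d := (A ∪ B).card
    have hsum : c + d = a + b := Finset.card_inter_add_card_union A B
    have han : a ≤ n := by simpa using Finset.card_le_univ A
    have hbn : b ≤ n := by simpa using Finset.card_le_univ B
    have hcn : c ≤ n := by simpa using Finset.card_le_univ (A ∩ B)
    have hdn : d ≤ n := by simpa using Finset.card_le_univ (A ∪ B)
    have hca : c ≤ a := Finset.card_le_card Finset.inter_subset_left
    have hcb : c ≤ b := Finset.card_le_card Finset.inter_subset_right
    have hchoose : n.choose c * n.choose d ≤ n.choose a * n.choose b := by
      rcases le_total a b with hab | hab
      · have := comb_prod_le n (a - c) c d (by omega) hdn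
        have e1 : c + (a - c) = a := by omega
        have e2 : d - (a - c) = b := by omega
        rwa [e1, e2] at this
      · have := comb_prod_le n (b - c) c d (by omega) hdn
        have e1 : c + (b - c) = b := by omega
        have e2 : d - (b - c) = a := by omega
        rw [e1, e2] at this
        exact le_of_le_of_eq this (Nat.mul_comm _ _)
    have hcdR : (n.choose c : ℝ) * (n.choose d : ℝ) ≤ (n.choose a : ℝ) * (n.choose b : ℝ) := by
      exact_mod_cast hchoose
    rw [hP a, hP b, hP c, hP d]
    exact key_ineq n π' S hπ1 hπ2 hSpos ν hν a b c d han hbn hcn hdn hsum hcdR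
end

section
/- Let λ > 0 and write I_k for I_k(2λ), the modified Bessel function of the first kind of integer order k evaluated at 2λ. Then for every positive integer m, | Σ_{n odd, 1 ≤ n ≤ m−1} ( I_{m+1}/I_{n+2} − I_m/I_{n−1} ) | ≤ 3. -/
open MeasureTheory ProbabilityTheory Real

/-!
Write `ρ_k = I_{k+1} / I_k` with `I_k = I_k(z)`. The recurrence
`z I_k = 2 (k + 1) I_{k+1} + z I_{k+2}` says `ρ_k = 1 / (2 (k + 1) / z + ρ_{k+1})`. Comparing
with the fixed points `F(k)` of these maps by downward induction from the large `k`, where the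
decay bound `ρ_k ≤ z / (2 (k + 1))` already lies below `F(k)`, gives
`ρ_{k+1} ≤ F(k + 1) ≤ ρ_k ≤ F(k) ≤ z / (z + k)`: the ratios decrease and are at most `1`.

With `n = 2t + 1`, the summand is at most `I_m / I_{2t+2} - I_m / I_{2t}`, which telescopes to at
most `1`. It is at least `-(1 - ρ_m) I_m / I_{2t+2}`, and pairing the outermost factors of
`I_m / I_{2t+2} = ∏ ρ_i` bounds this quotient by `(z / (z + m)) ^ (m / 2 - 1 - t)`; summing the
geometric series, the sum is at least `-(1 - ρ_m) (z + m) / m ≥ -3`, as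
`ρ_m ≥ z / (z + 2 (m + 1))`.
-/

/-- The positive root of `x * (2 * a / z + x) = 1`: the fixed point of the step
`x ↦ 1 / (2 * a / z + x)` of the continued fraction for `I_{a+1}(z) / I_a(z)`. -/
noncomputable def besselFix (z a : ℝ) : ℝ := (√(a ^ 2 + z ^ 2) - a) / z

section besselFix

variable {z : ℝ} (a : ℝ)

lemma besselFix_mul_add (hz : z ≠ 0) : besselFix z a * (2 * a / z + besselFix z a) = 1 := by
  have hs : √(a ^ 2 + z ^ 2) ^ 2 = a ^ 2 + z ^ 2 := Real.sq_sqrt (by positivity)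
  unfold besselFix
  field_simp
  linear_combination hs

lemma besselFix_pos (hz : 0 < z) : 0 < besselFix z a :=
  div_pos (sub_pos.2 (Real.lt_sqrt_of_sq_lt (by nlinarith))) hz

variable {a}

lemma besselFix_le (hz : 0 < z) (ha : 0 ≤ a) : besselFix z a ≤ z / (z + a) := by
  have hs : √(a ^ 2 + z ^ 2) ^ 2 = a ^ 2 + z ^ 2 := Real.sq_sqrt (by positivity)
  have hsa : a ≤ √(a ^ 2 + z ^ 2) := Real.le_sqrt_of_sq_le (by nlinarith)
  have hsz : z ≤ √(a ^ 2 + z ^ 2) := Real.le_sqrt_of_sq_le (by nlinarith)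
  unfold besselFix
  rw [div_le_div_iff₀ hz (by positivity)]
  nlinarith [mul_nonneg (sub_nonneg.2 hsa) (sub_nonneg.2 hsz)]

lemma besselFix_sub_besselFix_add_two_le (hz : 0 < z) (ha : 0 ≤ a) :
    besselFix z a - besselFix z (a + 2) ≤ 2 / z := by
  have hmono : √(a ^ 2 + z ^ 2) ≤ √((a + 2) ^ 2 + z ^ 2) := Real.sqrt_le_sqrt (by nlinarith)
  unfold besselFix
  rw [← sub_div]
  gcongr
  linarith

lemma div_le_besselFix (hz : 0 < z) (ha : 0 ≤ a) (h : z ^ 2 ≤ 4 * (a + 1)) :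
    z / (2 * (a + 1)) ≤ besselFix z a := by
  have hs : √(a ^ 2 + z ^ 2) ^ 2 = a ^ 2 + z ^ 2 := Real.sq_sqrt (by positivity)
  have hsa : a ≤ √(a ^ 2 + z ^ 2) := Real.le_sqrt_of_sq_le (by nlinarith)
  have hs2 : √(a ^ 2 + z ^ 2) ≤ a + 2 :=
    (Real.sqrt_le_sqrt (by nlinarith)).trans_eq (Real.sqrt_sq (by linarith))
  unfold besselFix
  rw [div_le_div_iff₀ (by positivity) hz]
  nlinarith [mul_le_mul_of_nonneg_left hs2 (sub_nonneg.2 hsa)]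

end besselFix

structure IsBesselISeq (z : ℝ) (I : ℕ → ℝ) : Prop where
  pos : ∀ k, 0 < I k
  mul_eq : ∀ k : ℕ, z * I k = 2 * (k + 1) * I (k + 1) + z * I (k + 2)
  mul_succ_le : ∀ k : ℕ, 2 * (k + 1) * I (k + 1) ≤ z * I k

namespace IsBesselISeq

open Finset

variable {z : ℝ} {I : ℕ → ℝ}

lemma arg_pos (hI : IsBesselISeq z I) : 0 < z := by
  have h := hI.mul_succ_le 0
  have h0 := hI.pos 0
  have h1 := hI.pos 1
  by_contra! hz
  nlinarith [mul_nonpos_of_nonpos_of_nonneg hz h0.le]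

lemma ratio_mul_add (hI : IsBesselISeq z I) (k : ℕ) :
    I (k + 1) / I k * (2 * (k + 1) / z + I (k + 2) / I (k + 1)) = 1 := by
  have := hI.pos k
  have := hI.pos (k + 1)
  have := hI.arg_pos
  field_simp
  linear_combination (hI.mul_eq k).symm

lemma besselFix_le_ratio_of_ratio_le (hI : IsBesselISeq z I) {k : ℕ}
    (h : I (k + 2) / I (k + 1) ≤ besselFix z (k + 1)) : besselFix z (k + 1) ≤ I (k + 1) / I k := by
  have hz := hI.arg_pos
  have hρ := hI.ratio_mul_add k
  have hF := besselFix_mul_add ((k : ℝ) + 1) hz.ne'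
  have hρpos : 0 < I (k + 2) / I (k + 1) := div_pos (hI.pos _) (hI.pos _)
  refine le_of_mul_le_mul_right ?_ (by positivity : 0 < 2 * (k + 1) / z + I (k + 2) / I (k + 1))
  nlinarith [mul_le_mul_of_nonneg_left h (besselFix_pos ((k : ℝ) + 1) hz).le]

lemma ratio_le_besselFix_of_le_ratio (hI : IsBesselISeq z I) {k : ℕ}
    (h : besselFix z (k + 2) ≤ I (k + 2) / I (k + 1)) : I (k + 1) / I k ≤ besselFix z k := by
  have hz := hI.arg_pos
  have hρ := hI.ratio_mul_add k
  have hF := besselFix_mul_add (k : ℝ) hz.ne'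
  have hdiff := besselFix_sub_besselFix_add_two_le hz (Nat.cast_nonneg k)
  have hFpos := besselFix_pos (k : ℝ) hz
  have hρpos : 0 < I (k + 1) / I k := div_pos (hI.pos _) (hI.pos _)
  have hV : 2 * k / z + besselFix z k ≤ 2 * (k + 1) / z + I (k + 2) / I (k + 1) := by
    have : 2 * ((k : ℝ) + 1) / z = 2 * k / z + 2 / z := by ring
    linarith
  refine le_of_mul_le_mul_right ?_ (by positivity : 0 < 2 * k / z + besselFix z k)
  nlinarith [mul_le_mul_of_nonneg_left hV hρpos.le]

/-- Downward induction from the indices `k` with `z ^ 2 ≤ 4 (k + 1)`, where the decay bound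
already lies below the fixed point. -/
lemma ratio_le_besselFix (hI : IsBesselISeq z I) (k : ℕ) : I (k + 1) / I k ≤ besselFix z k := by
  have hz := hI.arg_pos
  have base : ∀ k : ℕ, z ^ 2 ≤ 4 * (k + 1) → I (k + 1) / I k ≤ besselFix z k := by
    intro k hk
    refine le_trans ?_ (div_le_besselFix hz (Nat.cast_nonneg k) hk)
    rw [div_le_div_iff₀ (hI.pos k) (by positivity)]
    linarith [hI.mul_succ_le k]
  suffices h : ∀ n k : ℕ, z ^ 2 ≤ 4 * (k + 1 + 2 * n) → I (k + 1) / I k ≤ besselFix z k from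
    h ⌈z ^ 2⌉₊ k (by linarith [Nat.le_ceil (z ^ 2), (Nat.cast_nonneg k : (0 : ℝ) ≤ k)])
  intro n
  induction n with
  | zero => intro k hk; exact base k (by simpa using hk)
  | succ n ih =>
    intro k hk
    by_cases hk' : z ^ 2 ≤ 4 * (k + 1)
    · exact base k hk'
    have h2 := ih (k + 2) (by push_cast at hk ⊢; linarith)
    have hB := hI.besselFix_le_ratio_of_ratio_le (k := k + 1)
      (by convert h2 using 2; push_cast; ring)
    exact hI.ratio_le_besselFix_of_le_ratio (by convert hB using 2; push_cast; ring)

lemma besselFix_le_ratio (hI : IsBesselISeq z I) (k : ℕ) : besselFix z (k + 1) ≤ I (k + 1) / I k :=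
  hI.besselFix_le_ratio_of_ratio_le (by exact_mod_cast hI.ratio_le_besselFix (k + 1))

lemma ratio_succ_le (hI : IsBesselISeq z I) (k : ℕ) :
    I (k + 2) / I (k + 1) ≤ I (k + 1) / I k :=
  le_trans (by exact_mod_cast hI.ratio_le_besselFix (k + 1)) (hI.besselFix_le_ratio k)

lemma ratio_antitone (hI : IsBesselISeq z I) : Antitone fun k => I (k + 1) / I k :=
  antitone_nat_of_succ_le hI.ratio_succ_le

lemma ratio_le (hI : IsBesselISeq z I) (k : ℕ) : I (k + 1) / I k ≤ z / (z + k) :=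
  (hI.ratio_le_besselFix k).trans (besselFix_le hI.arg_pos (Nat.cast_nonneg k))

lemma succ_le (hI : IsBesselISeq z I) (k : ℕ) : I (k + 1) ≤ I k := by
  have hz := hI.arg_pos
  have h := (hI.ratio_le k).trans (div_le_one_of_le₀ (by simp) (by positivity))
  rwa [div_le_one (hI.pos k)] at h

lemma antitone (hI : IsBesselISeq z I) : Antitone I :=
  antitone_nat_of_succ_le hI.succ_le

lemma div_le_ratio (hI : IsBesselISeq z I) (k : ℕ) : z / (z + 2 * (k + 1)) ≤ I (k + 1) / I k := by
  have hz := hI.arg_pos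
  rw [div_le_div_iff₀ (by positivity) (hI.pos k)]
  nlinarith [hI.mul_eq k, hI.succ_le (k + 1)]

lemma ratio_mul_ratio_le (hI : IsBesselISeq z I) {x y M : ℕ} (h : M ≤ x + y) :
    I (x + 1) / I x * (I (y + 1) / I y) ≤ z / (z + M) := by
  have hz := hI.arg_pos
  have hM : (M : ℝ) ≤ x + y := by exact_mod_cast h
  calc I (x + 1) / I x * (I (y + 1) / I y) ≤ z / (z + x) * (z / (z + y)) :=
        mul_le_mul (hI.ratio_le x) (hI.ratio_le y) (div_pos (hI.pos _) (hI.pos _)).le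
          (by positivity)
    _ ≤ z / (z + M) := by
        rw [div_mul_div_comm, div_le_div_iff₀ (by positivity) (by positivity)]
        nlinarith [mul_nonneg (Nat.cast_nonneg x : (0 : ℝ) ≤ x) (Nat.cast_nonneg y : (0 : ℝ) ≤ y)]

/-- Pair the outermost factors of `I_{b+n} / I_b = ∏_{b ≤ i < b + n} I_{i+1} / I_i`. -/
lemma div_le_pow (hI : IsBesselISeq z I) {M : ℕ} (n b : ℕ) (h : M + 1 ≤ 2 * b + n) :
    I (b + n) / I b ≤ (z / (z + M)) ^ (n / 2) := by
  induction n using Nat.twoStepInduction generalizing b with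
  | zero => simp [(hI.pos b).ne']
  | one => simpa [div_le_one (hI.pos b)] using hI.succ_le b
  | more n ih _ =>
    have hsplit : I (b + (n + 2)) / I b
        = I (b + 1) / I b * (I (b + n + 2) / I (b + n + 1)) * (I (b + 1 + n) / I (b + 1)) := by
      have := hI.pos b; have := hI.pos (b + 1); have := hI.pos (b + n + 1)
      rw [show b + 1 + n = b + n + 1 by ring, show b + (n + 2) = b + n + 2 by ring]
      field_simp
    rw [hsplit, show (n + 2) / 2 = n / 2 + 1 by omega, pow_succ']
    exact mul_le_mul (hI.ratio_mul_ratio_le (by omega)) (ih (b + 1) (by omega))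
      (div_pos (hI.pos _) (hI.pos _)).le (by have := hI.arg_pos; positivity)

lemma div_succ_le_div (hI : IsBesselISeq z I) {a b : ℕ} (h : a ≤ b) :
    I (b + 1) / I (a + 1) ≤ I b / I a := by
  have hρ := hI.ratio_antitone h
  simp only at hρ
  rw [div_le_div_iff₀ (hI.pos _) (hI.pos _)] at hρ ⊢
  linarith

lemma sum_div_sub_div_le_one (hI : IsBesselISeq z I) (m : ℕ) :
    ∑ t ∈ range (m / 2), (I (m + 1) / I (2 * t + 3) - I m / I (2 * t)) ≤ 1 := by
  have hterm : ∀ t ∈ range (m / 2), I (m + 1) / I (2 * t + 3) - I m / I (2 * t)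
      ≤ I m / I (2 * (t + 1)) - I m / I (2 * t) := fun t ht => by
    have := hI.div_succ_le_div (a := 2 * t + 2) (b := m) (by simp at ht; omega)
    rw [mul_add, mul_one]
    linarith
  have hlast : I m / I (2 * (m / 2)) ≤ 1 :=
    div_le_one_of_le₀ (hI.antitone (Nat.mul_div_le m 2)) (hI.pos _).le
  calc _ ≤ ∑ t ∈ range (m / 2), (I m / I (2 * (t + 1)) - I m / I (2 * t)) := sum_le_sum hterm
    _ = I m / I (2 * (m / 2)) - I m / I 0 := sum_range_sub (fun t => I m / I (2 * t)) _
    _ ≤ 1 := by linarith [div_pos (hI.pos m) (hI.pos 0)]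

lemma neg_le_sum_div_sub_div (hI : IsBesselISeq z I) {m : ℕ} (hm : 0 < m) :
    -((1 - I (m + 1) / I m) * ((z + m) / m))
      ≤ ∑ t ∈ range (m / 2), (I (m + 1) / I (2 * t + 3) - I m / I (2 * t)) := by
  have hz := hI.arg_pos
  set ρ := I (m + 1) / I m with hρ
  set w := z / (z + m) with hw
  have hρ1 : ρ ≤ 1 := (hI.ratio_le m).trans (div_le_one_of_le₀ (by simp) (by positivity))
  have hterm : ∀ t ∈ range (m / 2), -((1 - ρ) * w ^ (m / 2 - 1 - t))
      ≤ I (m + 1) / I (2 * t + 3) - I m / I (2 * t) := fun t ht => by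
    have ht : 2 * t + 2 ≤ m := by simp at ht; omega
    have hpow : I m / I (2 * t + 2) ≤ w ^ (m / 2 - 1 - t) := by
      have := hI.div_le_pow (M := m) (m - (2 * t + 2)) (2 * t + 2) (by omega)
      rwa [Nat.add_sub_cancel' ht, show (m - (2 * t + 2)) / 2 = m / 2 - 1 - t by omega] at this
    have h1 : ρ * (I m / I (2 * t + 2)) ≤ I (m + 1) / I (2 * t + 3) := by
      rw [hρ, div_mul_div_cancel₀ (hI.pos m).ne']
      exact div_le_div_of_nonneg_left (hI.pos _).le (hI.pos _) (hI.succ_le _)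
    have h2 : I m / I (2 * t) ≤ I m / I (2 * t + 2) :=
      div_le_div_of_nonneg_left (hI.pos _).le (hI.pos _) (hI.antitone (by omega))
    nlinarith [mul_le_mul_of_nonneg_left hpow (sub_nonneg.2 hρ1)]
  have hgeom : ∑ t ∈ range (m / 2), w ^ (m / 2 - 1 - t) ≤ (z + m) / m := by
    rw [sum_range_reflect (fun s => w ^ s)]
    have hw1 : w < 1 := by rw [hw, div_lt_one (by positivity)]; simpa using hm
    rw [range_eq_Ico]
    refine (geom_sum_Ico_le_of_lt_one (by positivity) hw1).trans_eq ?_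
    rw [pow_zero, hw, one_sub_div (by positivity), one_div_div, add_sub_cancel_left]
  calc -((1 - ρ) * ((z + m) / m)) ≤ -((1 - ρ) * ∑ t ∈ range (m / 2), w ^ (m / 2 - 1 - t)) :=
        neg_le_neg (mul_le_mul_of_nonneg_left hgeom (sub_nonneg.2 hρ1))
    _ = ∑ t ∈ range (m / 2), -((1 - ρ) * w ^ (m / 2 - 1 - t)) := by rw [mul_sum, sum_neg_distrib]
    _ ≤ _ := sum_le_sum hterm

lemma one_sub_ratio_mul_le_three (hI : IsBesselISeq z I) {m : ℕ} (hm : 2 ≤ m) :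
    (1 - I (m + 1) / I m) * ((z + m) / m) ≤ 3 := by
  have hz := hI.arg_pos
  have hmR : (2 : ℝ) ≤ m := by exact_mod_cast hm
  have hρ : 1 - I (m + 1) / I m ≤ 2 * (m + 1) / (z + 2 * (m + 1)) := by
    have e : 1 - z / (z + 2 * (m + 1)) = 2 * (m + 1) / (z + 2 * (m + 1)) := by
      field_simp; ring
    linarith [hI.div_le_ratio m]
  calc (1 - I (m + 1) / I m) * ((z + m) / m) ≤ 2 * (m + 1) / (z + 2 * (m + 1)) * ((z + m) / m) :=
        mul_le_mul_of_nonneg_right hρ (by positivity)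
    _ ≤ 3 := by
        rw [div_mul_div_comm, div_le_iff₀ (by positivity)]
        nlinarith [mul_le_mul_of_nonneg_left hmR hz.le]

end IsBesselISeq

noncomputable def besselTerm (x : ℝ) (k j : ℕ) : ℝ :=
  x ^ (2 * j + k) / ((j.factorial : ℝ) * ((j + k).factorial : ℝ))

lemma besselI_natCast (k : ℕ) (z : ℝ) : besselI k z = ∑' j, besselTerm (z / 2) k j := by
  simp [besselI, besselTerm]

section besselTerm

variable {x : ℝ}

lemma besselTerm_pos (hx : 0 < x) (k j : ℕ) : 0 < besselTerm x k j := by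
  unfold besselTerm; positivity

lemma summable_besselTerm (hx : 0 ≤ x) (k : ℕ) : Summable (besselTerm x k) := by
  refine Summable.of_nonneg_of_le (fun j => by unfold besselTerm; positivity) (fun j => ?_)
    ((Real.summable_pow_div_factorial (x ^ 2)).mul_left (x ^ k))
  have hfac : (1 : ℝ) ≤ (j + k).factorial := by exact_mod_cast (j + k).factorial_pos
  calc besselTerm x k j ≤ x ^ (2 * j + k) / ((j.factorial : ℝ) * 1) := by
        unfold besselTerm; gcongr
    _ = x ^ k * ((x ^ 2) ^ j / j.factorial) := by rw [pow_add, pow_mul]; field_simp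

lemma mul_besselTerm_succ (k j : ℕ) :
    x * besselTerm x k (j + 1)
      = (k + 1) * besselTerm x (k + 1) (j + 1) + x * besselTerm x (k + 2) j := by
  unfold besselTerm
  rw [show j + 1 + k = j + k + 1 by ring, show j + 1 + (k + 1) = j + k + 1 + 1 by ring,
    show j + (k + 2) = j + k + 1 + 1 by ring]
  simp only [Nat.factorial_succ]
  push_cast
  field_simp
  ring

lemma mul_besselTerm_zero (k : ℕ) : x * besselTerm x k 0 = (k + 1) * besselTerm x (k + 1) 0 := by
  unfold besselTerm
  simp only [zero_add, Nat.factorial_succ]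
  push_cast
  field_simp
  ring

lemma mul_besselTerm_succ_le (hx : 0 ≤ x) (k j : ℕ) :
    (k + 1) * besselTerm x (k + 1) j ≤ x * besselTerm x k j := by
  unfold besselTerm
  rw [show j + (k + 1) = j + k + 1 by ring, Nat.factorial_succ]
  push_cast
  have hk : ((k : ℝ) + 1) / (j + k + 1) ≤ 1 :=
    div_le_one_of_le₀ (by linarith [(j.cast_nonneg : (0 : ℝ) ≤ j)]) (by positivity)
  calc ((k : ℝ) + 1) * (x ^ (2 * j + (k + 1)) / (j.factorial * ((j + k + 1) * (j + k).factorial)))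
      = (k + 1) / (j + k + 1) * (x * (x ^ (2 * j + k) / (j.factorial * (j + k).factorial))) := by
        field_simp; ring
    _ ≤ x * (x ^ (2 * j + k) / (j.factorial * (j + k).factorial)) :=
        mul_le_of_le_one_left (by positivity) hk

lemma mul_tsum_besselTerm (hx : 0 ≤ x) (k : ℕ) :
    x * ∑' j, besselTerm x k j
      = (k + 1) * ∑' j, besselTerm x (k + 1) j + x * ∑' j, besselTerm x (k + 2) j := by
  have hshift : Summable fun j => besselTerm x (k + 1) (j + 1) :=
    (summable_besselTerm hx (k + 1)).comp_injective (add_left_injective 1)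
  rw [(summable_besselTerm hx k).tsum_eq_zero_add,
    (summable_besselTerm hx (k + 1)).tsum_eq_zero_add, mul_add, ← tsum_mul_left,
    mul_besselTerm_zero]
  simp_rw [mul_besselTerm_succ]
  rw [(hshift.mul_left _).tsum_add ((summable_besselTerm hx (k + 2)).mul_left x), tsum_mul_left,
    tsum_mul_left]
  ring

end besselTerm

lemma isBesselISeq_besselI {z : ℝ} (hz : 0 < z) : IsBesselISeq z (fun k : ℕ => besselI k z) where
  pos k := by
    rw [besselI_natCast]
    exact (summable_besselTerm (by positivity) k).tsum_pos
      (fun j => (besselTerm_pos (by positivity) k j).le) 0 (besselTerm_pos (by positivity) k 0)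
  mul_eq k := by
    simp only [besselI_natCast]
    linear_combination 2 * mul_tsum_besselTerm (by positivity : 0 ≤ z / 2) k
  mul_succ_le k := by
    have hx : 0 ≤ z / 2 := by positivity
    have h := ((summable_besselTerm hx (k + 1)).mul_left _).tsum_le_tsum
      (mul_besselTerm_succ_le hx k) ((summable_besselTerm hx k).mul_left _)
    rw [tsum_mul_left, tsum_mul_left] at h
    simp only [besselI_natCast]
    linarith

lemma filter_odd_Icc_one_sub_one (m : ℕ) :
    (Finset.Icc 1 (m - 1)).filter (fun n => Odd n) = (Finset.range (m / 2)).image (2 * · + 1) := by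
  ext n
  simp only [Finset.mem_filter, Finset.mem_Icc, Finset.mem_image, Finset.mem_range, Nat.odd_iff]
  constructor
  · rintro ⟨⟨h1, h2⟩, hn⟩
    exact ⟨n / 2, by omega, by omega⟩
  · rintro ⟨t, ht, rfl⟩
    omega

theorem stmt_17_general (l : ℝ) (hl : 0 < l) (m : ℕ) :
    |∑ n ∈ (Finset.Icc 1 (m - 1)).filter (fun n => Odd n),
        (besselI ((m : ℤ) + 1) (2 * l) / besselI ((n : ℤ) + 2) (2 * l)
          - besselI (m : ℤ) (2 * l) / besselI ((n : ℤ) - 1) (2 * l))| ≤ 3 := by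
  rcases Nat.lt_or_ge m 2 with hm1 | hm2
  · simp [Finset.Icc_eq_empty (show ¬1 ≤ m - 1 by omega)]
  have hI := isBesselISeq_besselI (by positivity : 0 < 2 * l)
  have hreindex : ∑ n ∈ (Finset.Icc 1 (m - 1)).filter (fun n => Odd n),
        (besselI ((m : ℤ) + 1) (2 * l) / besselI ((n : ℤ) + 2) (2 * l)
          - besselI (m : ℤ) (2 * l) / besselI ((n : ℤ) - 1) (2 * l))
      = ∑ t ∈ Finset.range (m / 2),
          (besselI ((m + 1 : ℕ) : ℤ) (2 * l) / besselI ((2 * t + 3 : ℕ) : ℤ) (2 * l)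
            - besselI (m : ℤ) (2 * l) / besselI ((2 * t : ℕ) : ℤ) (2 * l)) := by
    rw [filter_odd_Icc_one_sub_one, Finset.sum_image (fun a _ b _ h => by simpa using h)]
    refine Finset.sum_congr rfl fun t _ => ?_
    push_cast
    ring_nf
  rw [hreindex, abs_le]
  constructor
  · linarith [hI.neg_le_sum_div_sub_div (by omega : 0 < m), hI.one_sub_ratio_mul_le_three hm2]
  · linarith [hI.sum_div_sub_div_le_one m]

/-- For `λ > 0` and every positive integer `m`,
`|Σ_{n odd, 1 ≤ n ≤ m−1} (I_{m+1}/I_{n+2} − I_m/I_{n−1})| ≤ 3`, where `I_k = I_k(2λ)`. -/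
theorem stmt_17 (l : ℝ) (hl : 0 < l) (m : ℕ) (hm : 0 < m) :
    |∑ n ∈ (Finset.Icc 1 (m - 1)).filter (fun n => Odd n),
        (besselI ((m : ℤ) + 1) (2 * l) / besselI ((n : ℤ) + 2) (2 * l)
          - besselI (m : ℤ) (2 * l) / besselI ((n : ℤ) - 1) (2 * l))| ≤ 3 :=
  stmt_17_general l hl m
end
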